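/- arXiv:math/9906108 — 6 statements merged into one kernel-verified Lean document; each statement's English description precedes it below -/
import Mathlib

section
/- Let 𝕃 : GL(n,ℝ) × GL(n,ℝ) → ℝ be smooth and let (g_k)_{k∈ℤ} be a sequence in GL(n,ℝ). Then the following are equivalent: (i) for every pair of integers k₀ < k₁ and every sequence (η_k)_{k∈ℤ} in M(n,ℝ) with η_{k₀} = η_{k₁} = 0, the function ε ↦ Σ_{k=k₀}^{k₁−1} 𝕃(g_k·exp(ε η_k), g_{k+1}·exp(ε η_{k+1})) has vanishing derivative at ε = 0; (ii) for every k ∈ ℤ and every η ∈ M(n,ℝ), d/dε [ 𝕃(g_k·exp(εη), g_{k+1}) + 𝕃(g_{k−1}, g_k·exp(εη)) ]|_{ε=0} = 0 (the discrete Euler–Lagrange equations d'₁𝕃(g_k,g_{k+1}) + d'₂𝕃(g_{k−1},g_k) = 0). -/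
/- STATEMENT 1: for a smooth discrete Lagrangian 𝕃 : GL(n,ℝ) × GL(n,ℝ) → ℝ and a
sequence (g_k) in GL(n,ℝ), stationarity of the action Σ 𝕃(g_k, g_{k+1}) under all
endpoint-fixing variations g̃_k = g_k·exp(ε η_k) is equivalent to the discrete
Euler–Lagrange equations d'₁𝕃(g_k,g_{k+1}) + d'₂𝕃(g_{k−1},g_k) = 0. -/

open Matrix NormedSpace

attribute [local instance] Matrix.normedAddCommGroup Matrix.normedSpace


/-- Type synonym for matrices carrying the `L∞` operator norm, under which
matrices form a Banach algebra. -/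
def MMdel (n : ℕ) : Type := Matrix (Fin n) (Fin n) ℝ
noncomputable instance {n} : NormedRing (MMdel n) := Matrix.linftyOpNormedRing
noncomputable instance {n} : NormedAlgebra ℝ (MMdel n) := Matrix.linftyOpNormedAlgebra
instance {n} : CompleteSpace (MMdel n) :=
  inferInstanceAs (CompleteSpace (Matrix (Fin n) (Fin n) ℝ))
instance {n} : FiniteDimensional ℝ (MMdel n) :=
  inferInstanceAs (FiniteDimensional ℝ (Matrix (Fin n) (Fin n) ℝ))

set_option maxHeartbeats 1000000
set_option synthInstance.maxHeartbeats 400000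

lemma del_curve_hasDerivAt {n : ℕ} (x μ : Matrix (Fin n) (Fin n) ℝ) :
    HasDerivAt (fun ε : ℝ => x * exp (ε • μ)) (x * μ) 0 := by
  have h := ((hasDerivAt_exp_smul_const (𝕂 := ℝ) (𝔸 := MMdel n) μ 0).const_mul (show MMdel n from x))
  erw [zero_smul, NormedSpace.exp_zero, one_mul] at h
  let idCLM : MMdel n →L[ℝ] Matrix (Fin n) (Fin n) ℝ :=
    { toLinearMap := LinearMap.id (R := ℝ) (M := Matrix (Fin n) (Fin n) ℝ)
      cont := LinearMap.continuous_of_finiteDimensional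
          (LinearMap.id (R := ℝ) (M := MMdel n) : MMdel n →ₗ[ℝ] Matrix (Fin n) (Fin n) ℝ) }
  exact idCLM.hasFDerivAt.comp_hasDerivAt 0 h

lemma del_isOpen_units {n : ℕ} :
    IsOpen {p : Matrix (Fin n) (Fin n) ℝ × Matrix (Fin n) (Fin n) ℝ |
      IsUnit p.1 ∧ IsUnit p.2} := by
  have h1 : IsOpen {M : Matrix (Fin n) (Fin n) ℝ | IsUnit M} := by
    have : {M : Matrix (Fin n) (Fin n) ℝ | IsUnit M}
        = (fun M : Matrix (Fin n) (Fin n) ℝ => M.det) ⁻¹' {x | x ≠ 0} := by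
      ext M
      simp [Matrix.isUnit_iff_isUnit_det, isUnit_iff_ne_zero]
    rw [this]
    exact (continuous_id.matrix_det).isOpen_preimage _ isOpen_ne
  exact (h1.preimage continuous_fst).inter (h1.preimage continuous_snd)

theorem discrete_euler_lagrange_equations (n : ℕ)
    (L : Matrix (Fin n) (Fin n) ℝ → Matrix (Fin n) (Fin n) ℝ → ℝ)
    (hL : ContDiffOn ℝ (⊤ : ℕ∞)
      (fun p : Matrix (Fin n) (Fin n) ℝ × Matrix (Fin n) (Fin n) ℝ => L p.1 p.2)
      {p | IsUnit p.1 ∧ IsUnit p.2})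
    (g : ℤ → Matrix (Fin n) (Fin n) ℝ) (hg : ∀ k, IsUnit (g k)) :
    (∀ k₀ k₁ : ℤ, k₀ < k₁ → ∀ η : ℤ → Matrix (Fin n) (Fin n) ℝ,
        η k₀ = 0 → η k₁ = 0 →
      deriv (fun ε : ℝ => ∑ k ∈ Finset.Ico k₀ k₁,
        L (g k * exp (ε • η k)) (g (k + 1) * exp (ε • η (k + 1)))) 0 = 0)
    ↔
    (∀ k : ℤ, ∀ η : Matrix (Fin n) (Fin n) ℝ,
      deriv (fun ε : ℝ =>
        L (g k * exp (ε • η)) (g (k + 1)) + L (g (k - 1)) (g k * exp (ε • η))) 0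
      = 0) := by
  set Φ : Matrix (Fin n) (Fin n) ℝ × Matrix (Fin n) (Fin n) ℝ → ℝ :=
    fun p => L p.1 p.2 with hΦ
  have hdiff : ∀ k : ℤ, DifferentiableAt ℝ Φ (g k, g (k + 1)) := by
    intro k
    have hmem : ((g k, g (k + 1)) :
        Matrix (Fin n) (Fin n) ℝ × Matrix (Fin n) (Fin n) ℝ)
        ∈ {p : Matrix (Fin n) (Fin n) ℝ × Matrix (Fin n) (Fin n) ℝ |
            IsUnit p.1 ∧ IsUnit p.2} := ⟨hg k, hg (k + 1)⟩
    exact (hL.contDiffAt (del_isOpen_units.mem_nhds hmem)).differentiableAt (by simp)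
  set D : ℤ → Matrix (Fin n) (Fin n) ℝ → Matrix (Fin n) (Fin n) ℝ → ℝ := fun k μ ν =>
    fderiv ℝ Φ (g k, g (k + 1)) (g k * μ, g (k + 1) * ν) with hD
  have hmain : ∀ (k : ℤ) (μ ν : Matrix (Fin n) (Fin n) ℝ),
      HasDerivAt (fun ε : ℝ => L (g k * exp (ε • μ)) (g (k + 1) * exp (ε • ν)))
        (D k μ ν) 0 := by
    intro k μ ν
    have hc : HasDerivAt
        (fun ε : ℝ => (g k * exp (ε • μ), g (k + 1) * exp (ε • ν)))
        (g k * μ, g (k + 1) * ν) 0 :=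
      (del_curve_hasDerivAt (g k) μ).prodMk (del_curve_hasDerivAt (g (k + 1)) ν)
    have hf := (hdiff k).hasFDerivAt
    have hx : ((g k, g (k + 1)) :
        Matrix (Fin n) (Fin n) ℝ × Matrix (Fin n) (Fin n) ℝ)
        = (g k * exp ((0 : ℝ) • μ), g (k + 1) * exp ((0 : ℝ) • ν)) := by
      simp
    rw [hx] at hf
    have h := hf.comp_hasDerivAt 0 hc
    rw [← hx] at h
    exact h
  have hDsplit : ∀ (k : ℤ) (μ ν : Matrix (Fin n) (Fin n) ℝ),
      D k μ ν = D k μ 0 + D k 0 ν := by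
    intro k μ ν
    simp only [hD, mul_zero]
    rw [← map_add]
    congr 1
    simp [Prod.ext_iff]
  have hD00 : ∀ k : ℤ, D k 0 0 = 0 := by
    intro k
    simp only [hD, mul_zero]
    rw [show ((0 : Matrix (Fin n) (Fin n) ℝ), (0 : Matrix (Fin n) (Fin n) ℝ))
      = (0 : Matrix (Fin n) (Fin n) ℝ × Matrix (Fin n) (Fin n) ℝ) from rfl, map_zero]
  have hA : ∀ (k : ℤ) (μ : Matrix (Fin n) (Fin n) ℝ),
      HasDerivAt (fun ε : ℝ => L (g k * exp (ε • μ)) (g (k + 1))) (D k μ 0) 0 := by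
    intro k μ
    have := hmain k μ 0
    simpa only [smul_zero, exp_zero, mul_one] using this
  have hB : ∀ (k : ℤ) (ν : Matrix (Fin n) (Fin n) ℝ),
      HasDerivAt (fun ε : ℝ => L (g k) (g (k + 1) * exp (ε • ν))) (D k 0 ν) 0 := by
    intro k ν
    have := hmain k 0 ν
    simpa only [smul_zero, exp_zero, mul_one] using this
  constructor
  · -- stationarity ⇒ EL, purely algebraic via a localized variation
    intro hS k η
    have h := hS (k - 1) (k + 1) (by omega)
      (fun j => if j = k then η else 0)
      (by simp) (by simp)
    beta_reduce at h
    have hEico : Finset.Ico (k - 1) (k + 1) = {k - 1, k} := by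
      ext x; simp [Finset.mem_Ico]; omega
    have hfun : (fun ε : ℝ => ∑ j ∈ Finset.Ico (k - 1) (k + 1),
          L (g j * exp (ε • if j = k then η else 0))
            (g (j + 1) * exp (ε • if j + 1 = k then η else 0)))
        = fun ε : ℝ =>
          L (g k * exp (ε • η)) (g (k + 1)) + L (g (k - 1)) (g k * exp (ε • η)) := by
      funext ε
      rw [hEico]
      rw [Finset.sum_insert (by simp), Finset.sum_singleton]
      rw [if_neg (by omega), if_pos (by omega), sub_add_cancel, if_pos rfl,
        if_neg (by omega)]
      simp [add_comm]
    rw [hfun] at h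
    exact h
  · -- EL ⇒ stationarity
    intro hEL k₀ k₁ hlt η hη0 hη1
    have hELAB : ∀ (k : ℤ) (μ : Matrix (Fin n) (Fin n) ℝ),
        D k μ 0 + D (k - 1) 0 μ = 0 := by
      intro k μ
      have h1 := hA k μ
      have h2 := hB (k - 1) μ
      rw [sub_add_cancel] at h2
      have := (h1.add h2).deriv
      rw [← this]
      exact hEL k μ
    have hsum : HasDerivAt (fun ε : ℝ => ∑ j ∈ Finset.Ico k₀ k₁,
        L (g j * exp (ε • η j)) (g (j + 1) * exp (ε • η (j + 1))))
        (∑ j ∈ Finset.Ico k₀ k₁, D j (η j) (η (j + 1))) 0 :=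
      HasDerivAt.fun_sum fun j _ => hmain j (η j) (η (j + 1))
    rw [hsum.deriv]
    calc ∑ j ∈ Finset.Ico k₀ k₁, D j (η j) (η (j + 1))
        = ∑ j ∈ Finset.Ico k₀ k₁, D j (η j) 0
          + ∑ j ∈ Finset.Ico k₀ k₁, D j 0 (η (j + 1)) := by
          rw [← Finset.sum_add_distrib]
          exact Finset.sum_congr rfl fun j _ => hDsplit j (η j) (η (j + 1))
      _ = ∑ j ∈ Finset.Ico k₀ (k₁ + 1), D j (η j) 0
          + ∑ j ∈ Finset.Ico (k₀ + 1) (k₁ + 1), D (j - 1) 0 (η j) := by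
          congr 1
          · have e1 : Finset.Ico k₀ (k₁ + 1) = insert k₁ (Finset.Ico k₀ k₁) := by
              ext x; simp [Finset.mem_Ico]; omega
            rw [e1, Finset.sum_insert (by simp), hη1, hD00, zero_add]
          · rw [← Finset.map_add_right_Ico _ _ 1, Finset.sum_map]
            exact Finset.sum_congr rfl fun j _ => by
              simp [addRightEmbedding]
      _ = ∑ j ∈ Finset.Ico k₀ (k₁ + 1), D j (η j) 0
          + ∑ j ∈ Finset.Ico k₀ (k₁ + 1), D (j - 1) 0 (η j) := by
          congr 1
          have e2 : Finset.Ico k₀ (k₁ + 1) = insert k₀ (Finset.Ico (k₀ + 1) (k₁ + 1)) := by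
            ext x; simp [Finset.mem_Ico]; omega
          rw [e2, Finset.sum_insert (by simp), hη0, hD00, zero_add]
      _ = ∑ j ∈ Finset.Ico k₀ (k₁ + 1), (D j (η j) 0 + D (j - 1) 0 (η j)) := by
          rw [Finset.sum_add_distrib]
      _ = 0 := by
          rw [Finset.sum_congr rfl fun j _ => hELAB j (η j), Finset.sum_const_zero]
end

section
/- Let 𝕃⁽ˡ⁾ : GL(n,ℝ) × GL(n,ℝ) → ℝ be smooth, and let (g_k)_{k∈ℤ}, (W_k)_{k∈ℤ} be sequences in GL(n,ℝ) with g_{k+1} = g_k·W_k for all k. Then the following are equivalent: (i) for every pair of integers k₀ < k₁ and every sequence (η_k) in M(n,ℝ) with η_{k₀} = η_{k₁} = 0, the function ε ↦ Σ_{k=k₀}^{k₁−1} 𝕃⁽ˡ⁾( g_k·exp(ε η_k), W_k·exp(ε(η_{k+1} − W_k⁻¹ η_k W_k)) ) has vanishing derivative at ε = 0; (ii) for every k ∈ ℤ and every η ∈ M(n,ℝ): d/dε [ 𝕃⁽ˡ⁾(g_k·exp(εη), W_k) + 𝕃⁽ˡ⁾(g_{k−1}, W_{k−1}·exp(εη))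 − 𝕃⁽ˡ⁾(g_k, W_k·exp(ε W_k⁻¹ η W_k)) ]|_{ε=0} = 0. (These are the left-trivialized discrete Euler–Lagrange equations Ad*W_k⁻¹·M_{k+1} = M_k + d'_g𝕃⁽ˡ⁾(g_k,W_k), with M_k = d'_W𝕃⁽ˡ⁾(g_{k−1},W_{k−1}); Proposition 1.) -/
/- STATEMENT 3 (Proposition 1): for a smooth left-trivialized Lagrangian
𝕃⁽ˡ⁾ : GL(n,ℝ)×GL(n,ℝ) → ℝ and sequences g_{k+1} = g_k·W_k, stationarity of
Σ 𝕃⁽ˡ⁾(g_k, W_k) under the admissible variations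
g̃_k = g_k·exp(εη_k), W̃_k = W_k·exp(ε(η_{k+1} − Ad(W_k⁻¹)·η_k)), η fixed at
endpoints, is equivalent to the left-trivialized discrete Euler–Lagrange equations
Ad*W_k⁻¹·M_{k+1} = M_k + d'_g𝕃⁽ˡ⁾(g_k,W_k), M_k = d'_W𝕃⁽ˡ⁾(g_{k−1},W_{k−1}). -/


open Matrix NormedSpace

theorem exp_entry_hasDerivAt_aux (n : ℕ) (A : Matrix (Fin n) (Fin n) ℝ) (i j : Fin n) :
    HasDerivAt (fun ε : ℝ => exp (ε • A) i j) (A i j) 0 := by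
  letI : NormedRing (Matrix (Fin n) (Fin n) ℝ) := Matrix.linftyOpNormedRing
  letI : NormedAlgebra ℝ (Matrix (Fin n) (Fin n) ℝ) := Matrix.linftyOpNormedAlgebra
  letI : CompleteSpace (Matrix (Fin n) (Fin n) ℝ) := FiniteDimensional.complete ℝ _
  have h : HasDerivAt (fun ε : ℝ => exp (ε • A)) A 0 := by
    have := hasDerivAt_exp_smul_const (𝕂 := ℝ) A (0 : ℝ)
    simp at this
    exact this
  let l : Matrix (Fin n) (Fin n) ℝ →ₗ[ℝ] ℝ :=
    { toFun := fun X => X i j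
      map_add' := fun X Y => rfl
      map_smul' := fun c X => rfl }
  exact l.toContinuousLinearMap.hasFDerivAt.comp_hasDerivAt 0 h

theorem shift_sum_aux {β : Type*} [AddCommMonoid β] (h : ℤ → β) (k₀ k₁ : ℤ) (hk : k₀ < k₁)
    (h0 : h k₀ = 0) (h1 : h k₁ = 0) :
    ∑ k ∈ Finset.Ico k₀ k₁, h (k + 1) = ∑ k ∈ Finset.Ico k₀ k₁, h k := by
  have e0 : ∑ k ∈ Finset.Ico k₀ k₁, h (k + 1) = ∑ k ∈ Finset.Ico (k₀+1) (k₁+1), h k := by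
    rw [← Finset.map_add_right_Ico, Finset.sum_map]; rfl
  have e1 : Finset.Ico (k₀+1) (k₁+1) = insert k₁ (Finset.Ico (k₀+1) k₁) := by
    ext x; simp; omega
  have e2 : Finset.Ico k₀ k₁ = insert k₀ (Finset.Ico (k₀+1) k₁) := by
    ext x; simp; omega
  rw [e0, e1, e2, Finset.sum_insert (by simp), Finset.sum_insert (by simp), h0, h1,
    zero_add]

attribute [local instance] Matrix.normedAddCommGroup Matrix.normedSpace

theorem exp_hasDerivAt_aux (n : ℕ) (A : Matrix (Fin n) (Fin n) ℝ) :
    HasDerivAt (fun ε : ℝ => exp (ε • A)) A 0 := by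
  apply hasDerivAt_pi.2
  intro i
  apply hasDerivAt_pi.2
  intro j
  exact exp_entry_hasDerivAt_aux n A i j

theorem units_open_aux (n : ℕ) :
    IsOpen {p : Matrix (Fin n) (Fin n) ℝ × Matrix (Fin n) (Fin n) ℝ | IsUnit p.1 ∧ IsUnit p.2} := by
  have h1 : IsOpen {A : Matrix (Fin n) (Fin n) ℝ | IsUnit A} := by
    have : {A : Matrix (Fin n) (Fin n) ℝ | IsUnit A} = Matrix.det ⁻¹' {x | x ≠ 0} := by
      ext A
      simp [Matrix.isUnit_iff_isUnit_det, isUnit_iff_ne_zero]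
    rw [this]
    exact isOpen_ne.preimage (by exact Continuous.matrix_det continuous_id)
  exact (h1.preimage continuous_fst).inter (h1.preimage continuous_snd)

theorem key_aux (n : ℕ)
    (Ll : Matrix (Fin n) (Fin n) ℝ → Matrix (Fin n) (Fin n) ℝ → ℝ)
    (hLl : ContDiffOn ℝ (⊤ : ℕ∞)
      (fun p : Matrix (Fin n) (Fin n) ℝ × Matrix (Fin n) (Fin n) ℝ => Ll p.1 p.2)
      {p | IsUnit p.1 ∧ IsUnit p.2})
    (P Q A B : Matrix (Fin n) (Fin n) ℝ) (hP : IsUnit P) (hQ : IsUnit Q) :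
    HasDerivAt (fun ε : ℝ => Ll (P * exp (ε • A)) (Q * exp (ε • B)))
      (fderiv ℝ (fun p : Matrix (Fin n) (Fin n) ℝ × Matrix (Fin n) (Fin n) ℝ => Ll p.1 p.2)
        (P, Q) (P * A, Q * B)) 0 := by
  have hdiff : DifferentiableAt ℝ
      (fun p : Matrix (Fin n) (Fin n) ℝ × Matrix (Fin n) (Fin n) ℝ => Ll p.1 p.2) (P, Q) :=
    (hLl.contDiffAt ((units_open_aux n).mem_nhds ⟨hP, hQ⟩)).differentiableAt (by simp)
  have h1 : HasDerivAt (fun ε : ℝ => P * exp (ε • A)) (P * A) 0 :=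
    (LinearMap.mulLeft ℝ P).toContinuousLinearMap.hasFDerivAt.comp_hasDerivAt 0
      (exp_hasDerivAt_aux n A)
  have h2 : HasDerivAt (fun ε : ℝ => Q * exp (ε • B)) (Q * B) 0 :=
    (LinearMap.mulLeft ℝ Q).toContinuousLinearMap.hasFDerivAt.comp_hasDerivAt 0
      (exp_hasDerivAt_aux n B)
  have hc : HasDerivAt (fun ε : ℝ => (P * exp (ε • A), Q * exp (ε • B))) (P * A, Q * B) 0 :=
    h1.prodMk h2
  have hF : HasFDerivAt (fun p : Matrix (Fin n) (Fin n) ℝ × Matrix (Fin n) (Fin n) ℝ => Ll p.1 p.2)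
      (fderiv ℝ (fun p : Matrix (Fin n) (Fin n) ℝ × Matrix (Fin n) (Fin n) ℝ => Ll p.1 p.2) (P, Q))
      (P * exp ((0:ℝ) • A), Q * exp ((0:ℝ) • B)) := by
    rw [show (P * exp ((0:ℝ) • A), Q * exp ((0:ℝ) • B)) = (P, Q) by simp]
    exact hdiff.hasFDerivAt
  exact hF.comp_hasDerivAt 0 hc

theorem left_trivialized_discrete_euler_lagrange (n : ℕ)
    (Ll : Matrix (Fin n) (Fin n) ℝ → Matrix (Fin n) (Fin n) ℝ → ℝ)
    (hLl : ContDiffOn ℝ (⊤ : ℕ∞)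
      (fun p : Matrix (Fin n) (Fin n) ℝ × Matrix (Fin n) (Fin n) ℝ => Ll p.1 p.2)
      {p | IsUnit p.1 ∧ IsUnit p.2})
    (g W : ℤ → Matrix (Fin n) (Fin n) ℝ)
    (hg : ∀ k, IsUnit (g k))
    (hgW : ∀ k, g (k + 1) = g k * W k) :
    (∀ k₀ k₁ : ℤ, k₀ < k₁ → ∀ η : ℤ → Matrix (Fin n) (Fin n) ℝ,
        η k₀ = 0 → η k₁ = 0 →
      deriv (fun ε : ℝ => ∑ k ∈ Finset.Ico k₀ k₁,
        Ll (g k * exp (ε • η k))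
           (W k * exp (ε • (η (k + 1) - (W k)⁻¹ * η k * W k)))) 0 = 0)
    ↔
    (∀ k : ℤ, ∀ η : Matrix (Fin n) (Fin n) ℝ,
      deriv (fun ε : ℝ =>
        Ll (g k * exp (ε • η)) (W k)
        + Ll (g (k - 1)) (W (k - 1) * exp (ε • η))
        - Ll (g k) (W k * exp (ε • ((W k)⁻¹ * η * W k)))) 0 = 0) := by
  have hW : ∀ k, IsUnit (W k) := by
    intro k
    have h1 := hg (k + 1)
    rw [hgW k, Matrix.isUnit_iff_isUnit_det, Matrix.det_mul] at h1
    exact (Matrix.isUnit_iff_isUnit_det _).mpr (isUnit_of_mul_isUnit_right h1)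
  have hdecomp : ∀ (L : Matrix (Fin n) (Fin n) ℝ × Matrix (Fin n) (Fin n) ℝ →L[ℝ] ℝ)
      (a b c : Matrix (Fin n) (Fin n) ℝ),
      L (a, b - c) = L (a, 0) + L (0, b) - L (0, c) := by
    intro L a b c
    have : (a, b - c) = (a, (0 : Matrix (Fin n) (Fin n) ℝ))
        + ((0 : Matrix (Fin n) (Fin n) ℝ), b) - ((0 : Matrix (Fin n) (Fin n) ℝ), c) := by
      simp [Prod.ext_iff]
    rw [this, map_sub, map_add]
  set ℓ : ℤ → (Matrix (Fin n) (Fin n) ℝ × Matrix (Fin n) (Fin n) ℝ →L[ℝ] ℝ) :=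
    fun k => fderiv ℝ (fun p : Matrix (Fin n) (Fin n) ℝ × Matrix (Fin n) (Fin n) ℝ => Ll p.1 p.2) (g k, W k) with hℓ
  set E : ℤ → Matrix (Fin n) (Fin n) ℝ → ℝ := fun k η =>
    ℓ k (g k * η, 0) + ℓ (k - 1) (0, W (k - 1) * η)
      - ℓ k (0, W k * ((W k)⁻¹ * η * W k)) with hE
  -- derivative of the (ii) function
  have hDeriv2 : ∀ (k : ℤ) (η : Matrix (Fin n) (Fin n) ℝ),
      HasDerivAt (fun ε : ℝ =>
        Ll (g k * exp (ε • η)) (W k)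
        + Ll (g (k - 1)) (W (k - 1) * exp (ε • η))
        - Ll (g k) (W k * exp (ε • ((W k)⁻¹ * η * W k)))) (E k η) 0 := by
    intro k η
    have h1 : HasDerivAt (fun ε : ℝ => Ll (g k * exp (ε • η)) (W k))
        (ℓ k (g k * η, 0)) 0 := by
      simpa using key_aux n Ll hLl (g k) (W k) η 0 (hg k) (hW k)
    have h2 : HasDerivAt (fun ε : ℝ => Ll (g (k - 1)) (W (k - 1) * exp (ε • η)))
        (ℓ (k - 1) (0, W (k - 1) * η)) 0 := by
      simpa using key_aux n Ll hLl (g (k - 1)) (W (k - 1)) 0 η (hg (k - 1)) (hW (k - 1))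
    have h3 : HasDerivAt (fun ε : ℝ => Ll (g k) (W k * exp (ε • ((W k)⁻¹ * η * W k))))
        (ℓ k (0, W k * ((W k)⁻¹ * η * W k))) 0 := by
      simpa using key_aux n Ll hLl (g k) (W k) 0 ((W k)⁻¹ * η * W k) (hg k) (hW k)
    exact (h1.add h2).sub h3
  -- derivative of the (i) function
  have hDeriv1 : ∀ (k₀ k₁ : ℤ) (η : ℤ → Matrix (Fin n) (Fin n) ℝ),
      HasDerivAt (fun ε : ℝ => ∑ k ∈ Finset.Ico k₀ k₁,
          Ll (g k * exp (ε • η k))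
            (W k * exp (ε • (η (k + 1) - (W k)⁻¹ * η k * W k))))
        (∑ k ∈ Finset.Ico k₀ k₁,
          ℓ k (g k * η k, W k * (η (k + 1) - (W k)⁻¹ * η k * W k))) 0 := by
    intro k₀ k₁ η
    exact HasDerivAt.fun_sum fun k _ =>
      key_aux n Ll hLl (g k) (W k) (η k) (η (k + 1) - (W k)⁻¹ * η k * W k) (hg k) (hW k)
  have hE0 : ∀ k, E k 0 = 0 := by
    intro k
    simp [hE, Prod.mk_zero_zero]
  -- the summation identity
  have hsum : ∀ (k₀ k₁ : ℤ), k₀ < k₁ → ∀ (η : ℤ → Matrix (Fin n) (Fin n) ℝ), η k₀ = 0 → η k₁ = 0 →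
      (∑ k ∈ Finset.Ico k₀ k₁,
        ℓ k (g k * η k, W k * (η (k + 1) - (W k)⁻¹ * η k * W k)))
      = ∑ k ∈ Finset.Ico k₀ k₁, E k (η k) := by
    intro k₀ k₁ hk η h0 h1
    have step : ∀ k : ℤ, ℓ k (g k * η k, W k * (η (k + 1) - (W k)⁻¹ * η k * W k))
        = (ℓ k (g k * η k, 0) - ℓ k (0, W k * ((W k)⁻¹ * η k * W k)))
          + ℓ k (0, W k * η (k + 1)) := by
      intro k
      rw [mul_sub, hdecomp]
      ring
    have hshift : ∑ k ∈ Finset.Ico k₀ k₁, ℓ k (0, W k * η (k + 1))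
        = ∑ k ∈ Finset.Ico k₀ k₁, ℓ (k - 1) (0, W (k - 1) * η k) := by
      have e : ∀ k : ℤ, ℓ k (0, W k * η (k + 1))
          = (fun j => ℓ (j - 1) (0, W (j - 1) * η j)) (k + 1) := by
        intro k; simp
      rw [Finset.sum_congr rfl fun k _ => e k]
      exact shift_sum_aux (fun j => ℓ (j - 1) (0, W (j - 1) * η j)) k₀ k₁ hk
        (by simp [h0, Prod.mk_zero_zero]) (by simp [h1, Prod.mk_zero_zero])
    calc ∑ k ∈ Finset.Ico k₀ k₁, ℓ k (g k * η k, W k * (η (k + 1) - (W k)⁻¹ * η k * W k))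
        = ∑ k ∈ Finset.Ico k₀ k₁,
            ((ℓ k (g k * η k, 0) - ℓ k (0, W k * ((W k)⁻¹ * η k * W k)))
              + ℓ k (0, W k * η (k + 1))) := Finset.sum_congr rfl fun k _ => step k
      _ = (∑ k ∈ Finset.Ico k₀ k₁,
            (ℓ k (g k * η k, 0) - ℓ k (0, W k * ((W k)⁻¹ * η k * W k))))
          + ∑ k ∈ Finset.Ico k₀ k₁, ℓ k (0, W k * η (k + 1)) := Finset.sum_add_distrib
      _ = (∑ k ∈ Finset.Ico k₀ k₁,
            (ℓ k (g k * η k, 0) - ℓ k (0, W k * ((W k)⁻¹ * η k * W k))))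
          + ∑ k ∈ Finset.Ico k₀ k₁, ℓ (k - 1) (0, W (k - 1) * η k) := by rw [hshift]
      _ = ∑ k ∈ Finset.Ico k₀ k₁,
            ((ℓ k (g k * η k, 0) - ℓ k (0, W k * ((W k)⁻¹ * η k * W k)))
              + ℓ (k - 1) (0, W (k - 1) * η k)) := Finset.sum_add_distrib.symm
      _ = ∑ k ∈ Finset.Ico k₀ k₁, E k (η k) := Finset.sum_congr rfl fun k _ => by
            simp [hE]; ring
  constructor
  · intro hi k η
    rw [(hDeriv2 k η).deriv]
    set η' : ℤ → Matrix (Fin n) (Fin n) ℝ := fun j => if j = k then η else 0 with hη'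
    have hne : (k - 1 : ℤ) ≠ k := by omega
    have h := hi (k - 1) (k + 1) (by omega) η' (by simp [hη', hne]) (by simp [hη'])
    rw [(hDeriv1 (k - 1) (k + 1) η').deriv,
      hsum (k - 1) (k + 1) (by omega) η' (by simp [hη', hne]) (by simp [hη'])] at h
    have hIco : Finset.Ico (k - 1) (k + 1) = {k - 1, k} := by
      ext x; simp; omega
    rw [hIco, Finset.sum_insert (by simp [hne]), Finset.sum_singleton] at h
    simpa [hη', hne, hE0] using h
  · intro hii k₀ k₁ hk η h0 h1
    rw [(hDeriv1 k₀ k₁ η).deriv, hsum k₀ k₁ hk η h0 h1]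
    refine Finset.sum_eq_zero fun k _ => ?_
    have h := hii k (η k)
    rw [(hDeriv2 k (η k)).deriv] at h
    exact h
end

section
/- Let Φ be a smooth representation of GL(n,ℝ) on ℝ^m with infinitesimal representation φ, and let Λ : GL(n,ℝ) × ℝ^m → ℝ be smooth. Let (W_k)_{k∈ℤ} be a sequence in GL(n,ℝ) and (P_k)_{k∈ℤ} a sequence in ℝ^m with P_{k+1} = Φ(W_k⁻¹)·P_k for all k. Then the following are equivalent: (i) for every pair of integers k₀ < k₁ and every sequence (η_k) in M(n,ℝ) with η_{k₀} = η_{k₁} = 0, the function ε ↦ Σ_{k=k₀}^{k₁−1} Λ( W_k·exp(ε(η_{k+1} − W_k⁻¹η_kW_k)), P_k − ε·φ(η_k)·P_k ) has vanishing derivative at ε = 0; (ii) for every k ∈ ℤ and every η ∈ M(n,ℝ), the discrete Euler–Poincaré equation holds: d/dε Λ(W_k·exp(ε W_k⁻¹ηW_k), P_k)|_{ε=0} = d/dε Λ(W_{k−1}·exp(εη), P_{k−1})|_{ε=0} − (D_PΛ(W_k,P_k))(φ(η)·P_k), where D_PΛ(W,P) is the partial Fréchet derivative of Λ in its second argument.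 (This is the left discrete Euler–Poincaré equation Ad*W_k⁻¹·M_{k+1} = M_k + ∇_PΛ(W_k,P_k) ⋄ P_k, with M_k = d'_WΛ(W_{k−1},P_{k−1}); Theorem 1(a).) -/
/- STATEMENT 6 (Theorem 1(a), variational form): for a smooth representation Φ of
GL(n,ℝ) on ℝ^m with infinitesimal representation φ, a smooth reduced Lagrangian
Λ : GL(n,ℝ) × ℝ^m → ℝ, and sequences with P_{k+1} = Φ(W_k⁻¹)·P_k, stationarity of
Σ Λ(W_k, P_k) under the admissible variations
W̃_k = W_k·exp(ε(η_{k+1} − Ad(W_k⁻¹)·η_k)), P̃_k = P_k − ε·φ(η_k)·P_k (η fixed at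
endpoints) is equivalent to the discrete Euler–Poincaré equations
Ad*W_k⁻¹·M_{k+1} = M_k + ∇_PΛ(W_k,P_k) ⋄ P_k, M_k = d'_WΛ(W_{k−1},P_{k−1}). -/

open Matrix NormedSpace

section linfty
attribute [local instance] Matrix.linftyOpNormedRing Matrix.linftyOpNormedAlgebra
lemma exp_entry_hasDerivAt {n : ℕ} (ξ : Matrix (Fin n) (Fin n) ℝ) (i j : Fin n) :
    HasDerivAt (fun ε : ℝ => exp (ε • ξ) i j) (ξ i j) 0 := by
  haveI : CompleteSpace (Matrix (Fin n) (Fin n) ℝ) := FiniteDimensional.complete ℝ _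
  have h := hasDerivAt_exp_smul_const (𝕂 := ℝ) ξ (0 : ℝ)
  rw [zero_smul, exp_zero, one_mul] at h
  let clm : Matrix (Fin n) (Fin n) ℝ →L[ℝ] ℝ :=
    LinearMap.toContinuousLinearMap
      ((LinearMap.proj (R := ℝ) (φ := fun _ : Fin n => ℝ) j).comp
        (LinearMap.proj (R := ℝ) (φ := fun _ : Fin n => Fin n → ℝ) i))
  exact clm.hasFDerivAt.comp_hasDerivAt 0 h
end linfty

attribute [local instance] Matrix.normedAddCommGroup Matrix.normedSpace

section helpers
variable {n m : ℕ}

lemma exp_hasDerivAt (ξ : Matrix (Fin n) (Fin n) ℝ) :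
    HasDerivAt (fun ε : ℝ => exp (ε • ξ)) ξ 0 := by
  exact hasDerivAt_pi.2 fun i => hasDerivAt_pi.2 fun j => exp_entry_hasDerivAt ξ i j

lemma isOpen_units_set :
    IsOpen {p : Matrix (Fin n) (Fin n) ℝ × (Fin m → ℝ) | IsUnit p.1} := by
  have he : {p : Matrix (Fin n) (Fin n) ℝ × (Fin m → ℝ) | IsUnit p.1}
      = (fun p : Matrix (Fin n) (Fin n) ℝ × (Fin m → ℝ) => p.1.det) ⁻¹' {x | x ≠ 0} := by
    ext p
    simp [Matrix.isUnit_iff_isUnit_det, isUnit_iff_ne_zero]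
  rw [he]
  exact isOpen_ne.preimage (continuous_fst.matrix_det)

lemma main_hasDerivAt
    (Λ : Matrix (Fin n) (Fin n) ℝ → (Fin m → ℝ) → ℝ)
    (hΛ : ContDiffOn ℝ (⊤ : ℕ∞) (fun p : Matrix (Fin n) (Fin n) ℝ × (Fin m → ℝ) => Λ p.1 p.2)
      {p | IsUnit p.1})
    (Wm : Matrix (Fin n) (Fin n) ℝ) (hWm : IsUnit Wm)
    (ξ : Matrix (Fin n) (Fin n) ℝ) (p : ℝ → Fin m → ℝ) (u Pt : Fin m → ℝ)
    (hp : HasDerivAt p u 0) (hp0 : p 0 = Pt) :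
    HasDerivAt (fun ε : ℝ => Λ (Wm * exp (ε • ξ)) (p ε))
      (fderiv ℝ (fun q : Matrix (Fin n) (Fin n) ℝ × (Fin m → ℝ) => Λ q.1 q.2) (Wm, Pt)
        (Wm * ξ, u)) 0 := by
  have hmem : ((Wm, Pt) : Matrix (Fin n) (Fin n) ℝ × (Fin m → ℝ)) ∈
      {p : Matrix (Fin n) (Fin n) ℝ × (Fin m → ℝ) | IsUnit p.1} := hWm
  have hdiff : DifferentiableAt ℝ
      (fun q : Matrix (Fin n) (Fin n) ℝ × (Fin m → ℝ) => Λ q.1 q.2) (Wm, Pt) :=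
    (hΛ.contDiffAt (isOpen_units_set.mem_nhds hmem)).differentiableAt (by simp)
  have hF := hdiff.hasFDerivAt
  have hmul : HasDerivAt (fun ε : ℝ => Wm * exp (ε • ξ)) (Wm * ξ) 0 := by
    let clm : Matrix (Fin n) (Fin n) ℝ →L[ℝ] Matrix (Fin n) (Fin n) ℝ :=
      LinearMap.toContinuousLinearMap (LinearMap.mulLeft ℝ Wm)
    exact clm.hasFDerivAt.comp_hasDerivAt 0 (exp_hasDerivAt ξ)
  have hc : HasDerivAt (fun ε : ℝ => ((Wm * exp (ε • ξ), p ε) :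
      Matrix (Fin n) (Fin n) ℝ × (Fin m → ℝ))) (Wm * ξ, u) 0 := hmul.prodMk hp
  have h0 : ((Wm * exp ((0:ℝ) • ξ), p 0) :
      Matrix (Fin n) (Fin n) ℝ × (Fin m → ℝ)) = (Wm, Pt) := by
    rw [zero_smul, exp_zero, mul_one, hp0]
  have hF2 : HasFDerivAt (fun q : Matrix (Fin n) (Fin n) ℝ × (Fin m → ℝ) => Λ q.1 q.2)
      (fderiv ℝ (fun q : Matrix (Fin n) (Fin n) ℝ × (Fin m → ℝ) => Λ q.1 q.2) (Wm, Pt))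
      ((Wm * exp ((0:ℝ) • ξ), p 0)) := by rw [h0]; exact hF
  exact hF2.comp_hasDerivAt 0 hc

lemma partial_fderiv
    (Λ : Matrix (Fin n) (Fin n) ℝ → (Fin m → ℝ) → ℝ)
    (hΛ : ContDiffOn ℝ (⊤ : ℕ∞) (fun p : Matrix (Fin n) (Fin n) ℝ × (Fin m → ℝ) => Λ p.1 p.2)
      {p | IsUnit p.1})
    (Wm : Matrix (Fin n) (Fin n) ℝ) (hWm : IsUnit Wm) (Pt w : Fin m → ℝ) :
    fderiv ℝ (fun v => Λ Wm v) Pt w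
      = fderiv ℝ (fun q : Matrix (Fin n) (Fin n) ℝ × (Fin m → ℝ) => Λ q.1 q.2) (Wm, Pt)
        (0, w) := by
  have hmem : ((Wm, Pt) : Matrix (Fin n) (Fin n) ℝ × (Fin m → ℝ)) ∈
      {p : Matrix (Fin n) (Fin n) ℝ × (Fin m → ℝ) | IsUnit p.1} := hWm
  have hdiff : DifferentiableAt ℝ
      (fun q : Matrix (Fin n) (Fin n) ℝ × (Fin m → ℝ) => Λ q.1 q.2) (Wm, Pt) :=
    (hΛ.contDiffAt (isOpen_units_set.mem_nhds hmem)).differentiableAt (by simp)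
  have hF := hdiff.hasFDerivAt
  have hg : HasFDerivAt (fun v : Fin m → ℝ => ((Wm, v) :
      Matrix (Fin n) (Fin n) ℝ × (Fin m → ℝ)))
      ((0 : (Fin m → ℝ) →L[ℝ] Matrix (Fin n) (Fin n) ℝ).prod
        (ContinuousLinearMap.id ℝ (Fin m → ℝ))) Pt :=
    (hasFDerivAt_const Wm Pt).prodMk (hasFDerivAt_id Pt)
  have hcomp := hF.comp Pt hg
  have h2 : HasFDerivAt (fun v => Λ Wm v)
      ((fderiv ℝ (fun q : Matrix (Fin n) (Fin n) ℝ × (Fin m → ℝ) => Λ q.1 q.2) (Wm, Pt)).comp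
        ((0 : (Fin m → ℝ) →L[ℝ] Matrix (Fin n) (Fin n) ℝ).prod
          (ContinuousLinearMap.id ℝ (Fin m → ℝ)))) Pt := hcomp
  rw [h2.fderiv]
  simp

lemma telescope_Ico (f : ℤ → ℝ) (a : ℤ) : ∀ b : ℤ, a ≤ b →
    ∑ k ∈ Finset.Ico a b, (f (k + 1) - f k) = f b - f a := by
  refine Int.le_induction ?_ ?_
  · simp
  · intro b hab ih
    have hins : Finset.Ico a (b + 1) = insert b (Finset.Ico a b) := by
      ext x
      simp only [Finset.mem_Ico, Finset.mem_insert]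
      omega
    rw [hins, Finset.sum_insert (by simp), ih]
    ring

end helpers

/-- The infinitesimal representation φ(ξ)·v := d/dε (Φ(exp(εξ))·v)|₀ associated to
a representation Φ of GL(n,ℝ) on ℝ^m. -/
noncomputable def infRep (n m : ℕ)
    (Φ : Matrix (Fin n) (Fin n) ℝ → ((Fin m → ℝ) →L[ℝ] (Fin m → ℝ)))
    (ξ : Matrix (Fin n) (Fin n) ℝ) (v : Fin m → ℝ) : Fin m → ℝ :=
  deriv (fun ε : ℝ => Φ (exp (ε • ξ)) v) 0

lemma infRep_zero {n m : ℕ}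
    (Φ : Matrix (Fin n) (Fin n) ℝ → ((Fin m → ℝ) →L[ℝ] (Fin m → ℝ)))
    (hΦone : Φ 1 = 1) (v : Fin m → ℝ) : infRep n m Φ 0 v = 0 := by
  unfold infRep
  have : (fun ε : ℝ => Φ (exp (ε • (0 : Matrix (Fin n) (Fin n) ℝ))) v) = fun _ => v := by
    funext ε
    rw [smul_zero, exp_zero, hΦone]
    rfl
  rw [this, deriv_const]


theorem left_discrete_euler_poincare (n m : ℕ)
    (Φ : Matrix (Fin n) (Fin n) ℝ → ((Fin m → ℝ) →L[ℝ] (Fin m → ℝ)))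
    (hΦone : Φ 1 = 1)
    (hΦmul : ∀ A B : Matrix (Fin n) (Fin n) ℝ, IsUnit A → IsUnit B →
      Φ (A * B) = (Φ A).comp (Φ B))
    (hΦsmooth : ContDiffOn ℝ (⊤ : ℕ∞)
      (fun p : Matrix (Fin n) (Fin n) ℝ × (Fin m → ℝ) => Φ p.1 p.2)
      {p | IsUnit p.1})
    (Λ : Matrix (Fin n) (Fin n) ℝ → (Fin m → ℝ) → ℝ)
    (hΛ : ContDiffOn ℝ (⊤ : ℕ∞)
      (fun p : Matrix (Fin n) (Fin n) ℝ × (Fin m → ℝ) => Λ p.1 p.2)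
      {p | IsUnit p.1})
    (W : ℤ → Matrix (Fin n) (Fin n) ℝ) (hW : ∀ k, IsUnit (W k))
    (P : ℤ → (Fin m → ℝ)) (hP : ∀ k, P (k + 1) = Φ ((W k)⁻¹) (P k)) :
    (∀ k₀ k₁ : ℤ, k₀ < k₁ → ∀ η : ℤ → Matrix (Fin n) (Fin n) ℝ,
        η k₀ = 0 → η k₁ = 0 →
      deriv (fun ε : ℝ => ∑ k ∈ Finset.Ico k₀ k₁,
        Λ (W k * exp (ε • (η (k + 1) - (W k)⁻¹ * η k * W k)))
          (P k - ε • infRep n m Φ (η k) (P k))) 0 = 0)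
    ↔
    (∀ k : ℤ, ∀ η : Matrix (Fin n) (Fin n) ℝ,
      deriv (fun ε : ℝ => Λ (W k * exp (ε • ((W k)⁻¹ * η * W k))) (P k)) 0
        = deriv (fun ε : ℝ => Λ (W (k - 1) * exp (ε • η)) (P (k - 1))) 0
          - fderiv ℝ (fun v => Λ (W k) v) (P k) (infRep n m Φ η (P k))) := by
  classical
  set F : Matrix (Fin n) (Fin n) ℝ × (Fin m → ℝ) → ℝ := fun q => Λ q.1 q.2 with hFdef
  have hA : ∀ (k : ℤ) (ξ : Matrix (Fin n) (Fin n) ℝ),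
      deriv (fun ε : ℝ => Λ (W k * exp (ε • ξ)) (P k)) 0
        = fderiv ℝ F (W k, P k) (W k * ξ, 0) := fun k ξ =>
    (main_hasDerivAt Λ hΛ (W k) (hW k) ξ (fun _ => P k) 0 (P k)
      (hasDerivAt_const 0 (P k)) rfl).deriv
  have hterm : ∀ (η : ℤ → Matrix (Fin n) (Fin n) ℝ) (k : ℤ),
      HasDerivAt (fun ε : ℝ =>
        Λ (W k * exp (ε • (η (k + 1) - (W k)⁻¹ * η k * W k)))
          (P k - ε • infRep n m Φ (η k) (P k)))
        (fderiv ℝ F (W k, P k)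
          (W k * (η (k + 1) - (W k)⁻¹ * η k * W k), -(infRep n m Φ (η k) (P k)))) 0 := by
    intro η k
    have h1 : HasDerivAt (fun ε : ℝ => ε • infRep n m Φ (η k) (P k))
        (infRep n m Φ (η k) (P k)) 0 := by
      simpa using (hasDerivAt_id (0 : ℝ)).smul_const (infRep n m Φ (η k) (P k))
    have hu : HasDerivAt (fun ε : ℝ => P k - ε • infRep n m Φ (η k) (P k))
        (-(infRep n m Φ (η k) (P k))) 0 := by
      have := (hasDerivAt_const (0 : ℝ) (P k)).sub h1
      rw [zero_sub] at this
      exact this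
    exact main_hasDerivAt Λ hΛ (W k) (hW k) _ _ _ (P k) hu (by simp)
  have hexpand : ∀ (k : ℤ) (x y : Matrix (Fin n) (Fin n) ℝ) (u : Fin m → ℝ),
      fderiv ℝ F (W k, P k) (W k * (x - y), -u)
        = fderiv ℝ F (W k, P k) (W k * x, 0) - fderiv ℝ F (W k, P k) (W k * y, 0)
          - fderiv ℝ F (W k, P k) (0, u) := by
    intro k x y u
    have hxy : ((W k * (x - y), -u) : Matrix (Fin n) (Fin n) ℝ × (Fin m → ℝ))
        = ((W k * x, 0) - (W k * y, 0)) - (0, u) := by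
      rw [Prod.ext_iff]
      constructor
      · simp [mul_sub]
      · simp
    rw [hxy, map_sub, map_sub]
  constructor
  · intro h k η
    have hne : (k - 1 : ℤ) ≠ k := by omega
    set η' : ℤ → Matrix (Fin n) (Fin n) ℝ := fun j => if j = k then η else 0 with hη'
    have h0 : η' (k - 1) = 0 := if_neg hne
    have h1 : η' (k + 1) = 0 := if_neg (by omega)
    have hk : η' k = η := if_pos rfl
    have hvar := h (k - 1) (k + 1) (by omega) η' h0 h1
    have hsumd : deriv (fun ε : ℝ => ∑ j ∈ Finset.Ico (k - 1) (k + 1),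
        Λ (W j * exp (ε • (η' (j + 1) - (W j)⁻¹ * η' j * W j)))
          (P j - ε • infRep n m Φ (η' j) (P j))) 0
        = ∑ j ∈ Finset.Ico (k - 1) (k + 1), fderiv ℝ F (W j, P j)
            (W j * (η' (j + 1) - (W j)⁻¹ * η' j * W j), -(infRep n m Φ (η' j) (P j))) :=
      (HasDerivAt.fun_sum (fun j _ => hterm η' j)).deriv
    rw [hsumd] at hvar
    have hset : Finset.Ico (k - 1) (k + 1) = {k - 1, k} := by
      ext x
      simp only [Finset.mem_Ico, Finset.mem_insert, Finset.mem_singleton]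
      omega
    rw [hset, Finset.sum_insert (by simp [hne]), Finset.sum_singleton] at hvar
    have ek : k - 1 + 1 = k := by omega
    rw [ek, hk, h0] at hvar
    rw [h1] at hvar
    rw [hexpand k 0 ((W k)⁻¹ * η * W k) (infRep n m Φ η (P k))] at hvar
    simp only [infRep_zero Φ hΦone, neg_zero, mul_zero, zero_mul, sub_zero, map_zero,
      mul_one, zero_sub] at hvar
    rw [hA k ((W k)⁻¹ * η * W k), hA (k - 1) η,
      partial_fderiv Λ hΛ (W k) (hW k) (P k) (infRep n m Φ η (P k)), ← hFdef]
    have hz0 : fderiv ℝ F (W k, P k) ((0 : Matrix (Fin n) (Fin n) ℝ), (0 : Fin m → ℝ)) = 0 :=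
      map_zero _
    linarith [hvar, hz0]
  · intro h k₀ k₁ hlt η hη0 hη1
    have hsumd : deriv (fun ε : ℝ => ∑ j ∈ Finset.Ico k₀ k₁,
        Λ (W j * exp (ε • (η (j + 1) - (W j)⁻¹ * η j * W j)))
          (P j - ε • infRep n m Φ (η j) (P j))) 0
        = ∑ j ∈ Finset.Ico k₀ k₁, fderiv ℝ F (W j, P j)
            (W j * (η (j + 1) - (W j)⁻¹ * η j * W j), -(infRep n m Φ (η j) (P j))) :=
      (HasDerivAt.fun_sum (fun j _ => hterm η j)).deriv
    rw [hsumd]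
    set f : ℤ → ℝ := fun j => fderiv ℝ F (W (j - 1), P (j - 1)) (W (j - 1) * η j, 0)
      with hfdef
    have hterm_eq : ∀ j : ℤ, fderiv ℝ F (W j, P j)
        (W j * (η (j + 1) - (W j)⁻¹ * η j * W j), -(infRep n m Φ (η j) (P j)))
        = f (j + 1) - f j := by
      intro j
      have hEP := h j (η j)
      rw [hA j ((W j)⁻¹ * η j * W j), hA (j - 1) (η j),
        partial_fderiv Λ hΛ (W j) (hW j) (P j) (infRep n m Φ (η j) (P j))] at hEP
      rw [hexpand j (η (j + 1)) ((W j)⁻¹ * η j * W j) (infRep n m Φ (η j) (P j)), hEP]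
      have ej : j + 1 - 1 = j := by omega
      simp only [hfdef]
      rw [ej]
      ring
    rw [Finset.sum_congr rfl (fun j _ => hterm_eq j), telescope_Ico f k₀ k₁ (le_of_lt hlt)]
    simp only [hfdef]
    rw [hη0, hη1]
    simp
    have hz : ((0 : Matrix (Fin n) (Fin n) ℝ), (0 : Fin m → ℝ)) = 0 := rfl
    rw [hz, map_zero, map_zero, sub_zero]
end

section
/- Let Φ be a smooth representation of GL(n,ℝ) on ℝ^m with infinitesimal representation φ, fix a ∈ ℝ^m, and let 𝕃⁽ˡ⁾ : GL(n,ℝ) × GL(n,ℝ) → ℝ be smooth and invariant under the isotropy subgroup: 𝕃⁽ˡ⁾(h·g, W) = 𝕃⁽ˡ⁾(g, W) whenever Φ(h)·a = a. Let Λ : GL(n,ℝ) × ℝ^m → ℝ be smooth with Λ(W, Φ(g⁻¹)·a) = 𝕃⁽ˡ⁾(g, W) for all g, W. Suppose sequences (g_k), (W_k) in GL(n,ℝ) satisfy g_{k+1} = g_k·W_k and the left-trivialized discrete Euler–Lagrange equations: for all k and all η ∈ M(n,ℝ), d/dε [ 𝕃⁽ˡ⁾(g_k·exp(εη), W_k)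 + 𝕃⁽ˡ⁾(g_{k−1}, W_{k−1}·exp(εη)) − 𝕃⁽ˡ⁾(g_k, W_k·exp(ε W_k⁻¹ηW_k)) ]|_{ε=0} = 0. Then, setting P_k := Φ(g_k⁻¹)·a, one has P_{k+1} = Φ(W_k⁻¹)·P_k and the discrete Euler–Poincaré equations hold: for all k and all η ∈ M(n,ℝ), d/dε Λ(W_k·exp(ε W_k⁻¹ηW_k), P_k)|_{ε=0} = d/dε Λ(W_{k−1}·exp(εη), P_{k−1})|_{ε=0} − (D_PΛ(W_k,P_k))(φ(η)·P_k). -/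
/- STATEMENT 7 (Theorem 1(a), reduction form): if 𝕃⁽ˡ⁾ is invariant under left
translations by the isotropy subgroup of a, Λ is the reduced Lagrangian
(Λ(W, Φ(g⁻¹)·a) = 𝕃⁽ˡ⁾(g,W)), and (g_k, W_k) with g_{k+1} = g_k·W_k satisfies the
left-trivialized discrete Euler–Lagrange equations, then P_k := Φ(g_k⁻¹)·a satisfies
P_{k+1} = Φ(W_k⁻¹)·P_k and the discrete Euler–Poincaré equations hold. -/

open Matrix NormedSpace

section ExpTransfer
attribute [local instance] Matrix.linftyOpNormedRing Matrix.linftyOpNormedAlgebra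

lemma expSlopeAux (n : ℕ) (ξ : Matrix (Fin n) (Fin n) ℝ) :
    Filter.Tendsto (slope (fun ε : ℝ => exp (ε • ξ)) 0) (nhdsWithin 0 {(0:ℝ)}ᶜ)
      (@nhds _ instTopologicalSpaceMatrix ξ) := by
  have h : HasDerivAt (fun ε : ℝ => exp (ε • ξ)) ξ 0 := by
    have h0 := hasDerivAt_exp_smul_const (𝕂 := ℝ) ξ (0 : ℝ)
    simp at h0
    exact h0
  exact hasDerivAt_iff_tendsto_slope.mp h
end ExpTransfer

attribute [local instance] Matrix.normedAddCommGroup Matrix.normedSpace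

lemma expCurveDeriv (n : ℕ) (ξ : Matrix (Fin n) (Fin n) ℝ) :
    HasDerivAt (fun ε : ℝ => exp (ε • ξ)) ξ 0 :=
  hasDerivAt_iff_tendsto_slope.mpr (expSlopeAux n ξ)

lemma unitsOpen (n : ℕ) : IsOpen {A : Matrix (Fin n) (Fin n) ℝ | IsUnit A} := by
  have h : {A : Matrix (Fin n) (Fin n) ℝ | IsUnit A}
      = Matrix.det ⁻¹' {x : ℝ | x ≠ 0} := by
    ext A
    simp [Matrix.isUnit_iff_isUnit_det, isUnit_iff_ne_zero]
  rw [h]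
  exact IsOpen.preimage continuous_id.matrix_det isOpen_ne

lemma unitsFstOpen (n : ℕ) (V : Type*) [TopologicalSpace V] :
    IsOpen {p : Matrix (Fin n) (Fin n) ℝ × V | IsUnit p.1} :=
  (unitsOpen n).preimage continuous_fst

lemma mulLeftDiff (n : ℕ) (Wm : Matrix (Fin n) (Fin n) ℝ)
    {f : ℝ → Matrix (Fin n) (Fin n) ℝ} {x : ℝ} (hf : DifferentiableAt ℝ f x) :
    DifferentiableAt ℝ (fun ε => Wm * f ε) x := by
  have h := ((LinearMap.mulLeft ℝ Wm).toContinuousLinearMap.differentiableAt).comp x hf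
  exact h

theorem reduction_to_discrete_euler_poincare (n m : ℕ)
    (Φ : Matrix (Fin n) (Fin n) ℝ → ((Fin m → ℝ) →L[ℝ] (Fin m → ℝ)))
    (hΦone : Φ 1 = 1)
    (hΦmul : ∀ A B : Matrix (Fin n) (Fin n) ℝ, IsUnit A → IsUnit B →
      Φ (A * B) = (Φ A).comp (Φ B))
    (hΦsmooth : ContDiffOn ℝ (⊤ : ℕ∞)
      (fun p : Matrix (Fin n) (Fin n) ℝ × (Fin m → ℝ) => Φ p.1 p.2)
      {p | IsUnit p.1})
    (a : Fin m → ℝ)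
    (Ll : Matrix (Fin n) (Fin n) ℝ → Matrix (Fin n) (Fin n) ℝ → ℝ)
    (hLl : ContDiffOn ℝ (⊤ : ℕ∞)
      (fun p : Matrix (Fin n) (Fin n) ℝ × Matrix (Fin n) (Fin n) ℝ => Ll p.1 p.2)
      {p | IsUnit p.1 ∧ IsUnit p.2})
    (hinv : ∀ h g W : Matrix (Fin n) (Fin n) ℝ, IsUnit h → Φ h a = a →
      Ll (h * g) W = Ll g W)
    (Λ : Matrix (Fin n) (Fin n) ℝ → (Fin m → ℝ) → ℝ)
    (hΛ : ContDiffOn ℝ (⊤ : ℕ∞)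
      (fun p : Matrix (Fin n) (Fin n) ℝ × (Fin m → ℝ) => Λ p.1 p.2)
      {p | IsUnit p.1})
    (hred : ∀ g W : Matrix (Fin n) (Fin n) ℝ, Λ W (Φ g⁻¹ a) = Ll g W)
    (g W : ℤ → Matrix (Fin n) (Fin n) ℝ)
    (hg : ∀ k, IsUnit (g k)) (hWu : ∀ k, IsUnit (W k))
    (hgW : ∀ k, g (k + 1) = g k * W k)
    (hDEL : ∀ k : ℤ, ∀ η : Matrix (Fin n) (Fin n) ℝ,
      deriv (fun ε : ℝ =>
        Ll (g k * exp (ε • η)) (W k)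
        + Ll (g (k - 1)) (W (k - 1) * exp (ε • η))
        - Ll (g k) (W k * exp (ε • ((W k)⁻¹ * η * W k)))) 0 = 0)
    (P : ℤ → (Fin m → ℝ)) (hPdef : ∀ k, P k = Φ ((g k)⁻¹) a) :
    (∀ k, P (k + 1) = Φ ((W k)⁻¹) (P k)) ∧
    (∀ k : ℤ, ∀ η : Matrix (Fin n) (Fin n) ℝ,
      deriv (fun ε : ℝ => Λ (W k * exp (ε • ((W k)⁻¹ * η * W k))) (P k)) 0
        = deriv (fun ε : ℝ => Λ (W (k - 1) * exp (ε • η)) (P (k - 1))) 0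
          - fderiv ℝ (fun v => Λ (W k) v) (P k) (infRep n m Φ η (P k))) := by
  -- differentiability of the pair maps on the open set of invertible first components
  have hΦpair : ∀ (A : Matrix (Fin n) (Fin n) ℝ) (v : Fin m → ℝ), IsUnit A →
      DifferentiableAt ℝ (fun p : Matrix (Fin n) (Fin n) ℝ × (Fin m → ℝ) => Φ p.1 p.2) (A, v) :=
    fun A v hA =>
      (hΦsmooth.contDiffAt ((unitsFstOpen n _).mem_nhds hA)).differentiableAt (by simp)
  have hΛpair : ∀ (A : Matrix (Fin n) (Fin n) ℝ) (v : Fin m → ℝ), IsUnit A →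
      DifferentiableAt ℝ (fun p : Matrix (Fin n) (Fin n) ℝ × (Fin m → ℝ) => Λ p.1 p.2) (A, v) :=
    fun A v hA =>
      (hΛ.contDiffAt ((unitsFstOpen n _).mem_nhds hA)).differentiableAt (by simp)
  -- the curve ε ↦ Φ(exp(εξ))·v has derivative infRep ξ v at 0
  have hu : ∀ (ξ : Matrix (Fin n) (Fin n) ℝ) (v : Fin m → ℝ),
      HasDerivAt (fun ε : ℝ => Φ (exp (ε • ξ)) v) (infRep n m Φ ξ v) 0 := by
    intro ξ v
    have hc : DifferentiableAt ℝ
        (fun ε : ℝ => ((exp (ε • ξ), v) : Matrix (Fin n) (Fin n) ℝ × (Fin m → ℝ))) 0 :=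
      ((expCurveDeriv n ξ).differentiableAt).prodMk (differentiableAt_const v)
    have hp : DifferentiableAt ℝ
        (fun p : Matrix (Fin n) (Fin n) ℝ × (Fin m → ℝ) => Φ p.1 p.2)
        ((fun ε : ℝ => ((exp (ε • ξ), v) : Matrix (Fin n) (Fin n) ℝ × (Fin m → ℝ))) 0) := by
      simp only [zero_smul, exp_zero]
      exact hΦpair 1 v isUnit_one
    have hdiff : DifferentiableAt ℝ (fun ε : ℝ => Φ (exp (ε • ξ)) v) 0 := by
      have h := hp.comp 0 hc
      exact h
    simpa [infRep] using hdiff.hasDerivAt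
  -- partial differentiability of Λ in its second argument
  have hΛsnd : ∀ (Wm : Matrix (Fin n) (Fin n) ℝ), IsUnit Wm → ∀ v : Fin m → ℝ,
      HasFDerivAt (fun v' => Λ Wm v') (fderiv ℝ (fun v' => Λ Wm v') v) v := by
    intro Wm hWm v
    have hc : DifferentiableAt ℝ
        (fun v' : Fin m → ℝ => ((Wm, v') : Matrix (Fin n) (Fin n) ℝ × (Fin m → ℝ))) v :=
      (differentiableAt_const Wm).prodMk differentiableAt_id
    exact ((hΛpair Wm v hWm).comp v hc).hasFDerivAt
  -- differentiability of ε ↦ Λ(W·exp(εξ), v) at 0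
  have hΛcurve : ∀ (Wm ξ : Matrix (Fin n) (Fin n) ℝ) (v : Fin m → ℝ), IsUnit Wm →
      DifferentiableAt ℝ (fun ε : ℝ => Λ (Wm * exp (ε • ξ)) v) 0 := by
    intro Wm ξ v hWm
    have hc : DifferentiableAt ℝ
        (fun ε : ℝ => ((Wm * exp (ε • ξ), v) : Matrix (Fin n) (Fin n) ℝ × (Fin m → ℝ))) 0 :=
      (mulLeftDiff n Wm (expCurveDeriv n ξ).differentiableAt).prodMk (differentiableAt_const v)
    have hp : DifferentiableAt ℝ
        (fun p : Matrix (Fin n) (Fin n) ℝ × (Fin m → ℝ) => Λ p.1 p.2)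
        ((fun ε : ℝ => ((Wm * exp (ε • ξ), v) : Matrix (Fin n) (Fin n) ℝ × (Fin m → ℝ))) 0) := by
      simp only [zero_smul, exp_zero, mul_one]
      exact hΛpair Wm v hWm
    exact hp.comp 0 hc
  constructor
  · -- P (k+1) = Φ((W k)⁻¹)(P k)
    intro k
    rw [hPdef (k + 1), hgW k, Matrix.mul_inv_rev,
      hΦmul _ _ (isUnit_nonsing_inv_iff.mpr (hWu k)) (isUnit_nonsing_inv_iff.mpr (hg k)),
      ContinuousLinearMap.comp_apply, ← hPdef k]
  · -- discrete Euler–Poincaré equations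
    intro k η
    -- rewrite the three terms of the discrete Euler-Lagrange equations via Λ
    have hAfun : (fun ε : ℝ => Ll (g k * exp (ε • η)) (W k))
        = fun ε : ℝ => Λ (W k) (Φ (exp (ε • (-η))) (P k)) := by
      funext ε
      rw [← hred (g k * exp (ε • η)) (W k)]
      congr 1
      have h2 : (g k * exp (ε • η))⁻¹ = exp (ε • (-η)) * (g k)⁻¹ := by
        rw [Matrix.mul_inv_rev]
        congr 1
        rw [smul_neg, Matrix.exp_neg]
      rw [h2, hΦmul _ _ (by rw [smul_neg, Matrix.exp_neg]; exact
            isUnit_nonsing_inv_iff.mpr (Matrix.isUnit_exp (ε • η)))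
          (isUnit_nonsing_inv_iff.mpr (hg k)),
        ContinuousLinearMap.comp_apply, ← hPdef k]
    have hBfun : (fun ε : ℝ => Ll (g (k - 1)) (W (k - 1) * exp (ε • η)))
        = fun ε : ℝ => Λ (W (k - 1) * exp (ε • η)) (P (k - 1)) := by
      funext ε
      rw [hPdef (k - 1), hred]
    have hCfun : (fun ε : ℝ => Ll (g k) (W k * exp (ε • ((W k)⁻¹ * η * W k))))
        = fun ε : ℝ => Λ (W k * exp (ε • ((W k)⁻¹ * η * W k))) (P k) := by
      funext ε
      rw [hPdef k, hred]
    -- derivative of the A-term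
    have hneg : HasDerivAt (fun ε : ℝ => Φ (exp (ε • (-η))) (P k))
        (-(infRep n m Φ η (P k))) 0 := by
      have h1 : HasDerivAt (fun ε : ℝ => Φ (exp (ε • η)) (P k))
          (infRep n m Φ η (P k)) ((fun ε : ℝ => -ε) 0) := by
        simpa using hu η (P k)
      have hn : HasDerivAt (fun ε : ℝ => -ε) (-1 : ℝ) 0 := by
        exact (hasDerivAt_id (0 : ℝ)).neg
      have h2 := h1.scomp 0 hn
      have h3 : ((fun ε : ℝ => Φ (exp (ε • η)) (P k)) ∘ Neg.neg)
          = fun ε : ℝ => Φ (exp (ε • (-η))) (P k) := by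
        funext ε
        simp [Function.comp, neg_smul, smul_neg]
      rw [h3] at h2
      simpa [neg_one_smul] using h2
    have hl : HasFDerivAt (fun v => Λ (W k) v)
        (fderiv ℝ (fun v => Λ (W k) v) (P k))
        ((fun ε : ℝ => Φ (exp (ε • (-η))) (P k)) 0) := by
      simp only [zero_smul, exp_zero, hΦone, ContinuousLinearMap.one_apply]
      exact hΛsnd (W k) (hWu k) (P k)
    have hAder : HasDerivAt (fun ε : ℝ => Λ (W k) (Φ (exp (ε • (-η))) (P k)))
        (-(fderiv ℝ (fun v => Λ (W k) v) (P k) (infRep n m Φ η (P k)))) 0 := by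
      have h := hl.comp_hasDerivAt 0 hneg
      simp at h ⊢
      exact h
    -- derivatives of the B- and C-terms
    have hBder : HasDerivAt (fun ε : ℝ => Λ (W (k - 1) * exp (ε • η)) (P (k - 1)))
        (deriv (fun ε : ℝ => Λ (W (k - 1) * exp (ε • η)) (P (k - 1))) 0) 0 :=
      (hΛcurve (W (k - 1)) η (P (k - 1)) (hWu (k - 1))).hasDerivAt
    have hCder : HasDerivAt
        (fun ε : ℝ => Λ (W k * exp (ε • ((W k)⁻¹ * η * W k))) (P k))
        (deriv (fun ε : ℝ => Λ (W k * exp (ε • ((W k)⁻¹ * η * W k))) (P k)) 0) 0 :=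
      (hΛcurve (W k) ((W k)⁻¹ * η * W k) (P k) (hWu k)).hasDerivAt
    -- combine with the discrete Euler-Lagrange equations
    have h123 := (hAder.add hBder).sub hCder
    have h0 := hDEL k η
    rw [show (fun ε : ℝ =>
        Ll (g k * exp (ε • η)) (W k)
        + Ll (g (k - 1)) (W (k - 1) * exp (ε • η))
        - Ll (g k) (W k * exp (ε • ((W k)⁻¹ * η * W k))))
      = (fun ε : ℝ =>
        Λ (W k) (Φ (exp (ε • (-η))) (P k))
        + Λ (W (k - 1) * exp (ε • η)) (P (k - 1))
        - Λ (W k * exp (ε • ((W k)⁻¹ * η * W k))) (P k)) from by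
        funext ε
        rw [congrFun hAfun ε, congrFun hBfun ε, congrFun hCfun ε]] at h0
    have h0' : _ = (0:ℝ) := h123.deriv.symm.trans h0
    linarith
end

section
/- Let 𝕃⁽ʳ⁾ : GL(n,ℝ) × GL(n,ℝ) → ℝ be smooth, and let (g_k)_{k∈ℤ}, (w_k)_{k∈ℤ} be sequences in GL(n,ℝ) with g_{k+1} = w_k·g_k for all k. Then the following are equivalent: (i) for every pair of integers k₀ < k₁ and every sequence (η_k) in M(n,ℝ) with η_{k₀} = η_{k₁} = 0, the function ε ↦ Σ_{k=k₀}^{k₁−1} 𝕃⁽ʳ⁾( exp(ε η_k)·g_k, exp(ε(η_{k+1} − w_k η_k w_k⁻¹))·w_k ) has vanishing derivative at ε = 0; (ii) for every k ∈ ℤ and every η ∈ M(n,ℝ): d/dε [ 𝕃⁽ʳ⁾(exp(εη)·g_k, w_k) + 𝕃⁽ʳ⁾(g_{k−1}, exp(εη)·w_{k−1}) − 𝕃⁽ʳ⁾(g_k, exp(ε w_k η w_k⁻¹)·w_k) ]|_{ε=0} = 0. (These are the right-trivialized discrete Euler–Lagrange equations Ad*w_k·m_{k+1} = m_k + d_g𝕃⁽ʳ⁾(g_k,w_k),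 with m_k = d_w𝕃⁽ʳ⁾(g_{k−1},w_{k−1}); Proposition 2.) -/
/- STATEMENT 11 (Proposition 2): for a smooth right-trivialized Lagrangian
𝕃⁽ʳ⁾ : GL(n,ℝ)×GL(n,ℝ) → ℝ and sequences g_{k+1} = w_k·g_k, stationarity of
Σ 𝕃⁽ʳ⁾(g_k, w_k) under the admissible variations
g̃_k = exp(εη_k)·g_k, w̃_k = exp(ε(η_{k+1} − Ad(w_k)·η_k))·w_k, η fixed at
endpoints, is equivalent to the right-trivialized discrete Euler–Lagrange equations
Ad*w_k·m_{k+1} = m_k + d_g𝕃⁽ʳ⁾(g_k,w_k), m_k = d_w𝕃⁽ʳ⁾(g_{k−1},w_{k−1}). -/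

open Matrix NormedSpace

section linftyAux
attribute [local instance] Matrix.linftyOpNormedRing Matrix.linftyOpNormedAlgebra

lemma aux_exp_slope_tendsto (n : ℕ) (η : Matrix (Fin n) (Fin n) ℝ) :
    Filter.Tendsto (slope (fun ε : ℝ => exp (ε • η)) 0) (nhdsWithin 0 {0}ᶜ) (nhds η) := by
  have h := hasDerivAt_exp_smul_const (𝕂 := ℝ) η 0
  simp only [zero_smul, exp_zero, one_mul] at h
  exact hasDerivAt_iff_tendsto_slope.mp h

end linftyAux

attribute [local instance] Matrix.normedAddCommGroup Matrix.normedSpace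

lemma aux_exp_hasDerivAt (n : ℕ) (η : Matrix (Fin n) (Fin n) ℝ) :
    HasDerivAt (fun ε : ℝ => exp (ε • η)) η 0 := by
  refine hasDerivAt_iff_tendsto_slope.mpr ?_
  exact aux_exp_slope_tendsto n η

/-- Summation-by-parts core of the discrete Euler–Lagrange equivalence. -/
lemma aux_abstract {E : Type*} [AddCommGroup E] (a b : ℤ → E → ℝ)
    (ha0 : ∀ k, a k 0 = 0) (hb0 : ∀ k, b k 0 = 0) :
    (∀ k₀ k₁ : ℤ, k₀ < k₁ → ∀ η : ℤ → E, η k₀ = 0 → η k₁ = 0 →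
      ∑ k ∈ Finset.Ico k₀ k₁, (a k (η k) + b k (η (k + 1))) = 0)
    ↔ (∀ (k : ℤ) (x : E), a k x + b (k - 1) x = 0) := by
  constructor
  · intro h k x
    have hs := h (k - 1) (k + 1) (by omega) (fun j => if j = k then x else 0)
      (if_neg (by omega)) (if_neg (by omega))
    have hset : Finset.Ico (k - 1) (k + 1) = {k - 1, k} := by
      ext j; simp only [Finset.mem_Ico, Finset.mem_insert, Finset.mem_singleton]; omega
    rw [hset, Finset.sum_insert (by simp), Finset.sum_singleton] at hs
    simp only [if_neg (show k - 1 ≠ k by omega), if_pos (show k - 1 + 1 = k by omega),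
      if_pos rfl, if_neg (show k + 1 ≠ k by omega), if_true, ha0, hb0] at hs
    linarith
  · intro h k₀ k₁ hlt η h0 h1
    rw [Finset.sum_add_distrib]
    have shift : ∑ k ∈ Finset.Ico k₀ k₁, b k (η (k + 1))
        = ∑ k ∈ Finset.Ico (k₀ + 1) (k₁ + 1), b (k - 1) (η k) := by
      rw [← Finset.map_add_right_Ico k₀ k₁ 1, Finset.sum_map]
      simp
    rw [shift]
    have e1 : Finset.Ico k₀ k₁ = insert k₀ (Finset.Ico (k₀ + 1) k₁) := by
      ext j; simp only [Finset.mem_Ico, Finset.mem_insert]; omega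
    have e2 : Finset.Ico (k₀ + 1) (k₁ + 1) = insert k₁ (Finset.Ico (k₀ + 1) k₁) := by
      ext j; simp only [Finset.mem_Ico, Finset.mem_insert]; omega
    rw [e1, Finset.sum_insert (by simp), e2, Finset.sum_insert (by simp),
      h0, h1, ha0, hb0]
    have hsum : ∑ k ∈ Finset.Ico (k₀ + 1) k₁, a k (η k)
        + ∑ k ∈ Finset.Ico (k₀ + 1) k₁, b (k - 1) (η k)
        = ∑ k ∈ Finset.Ico (k₀ + 1) k₁, (a k (η k) + b (k - 1) (η k)) := by
      rw [Finset.sum_add_distrib]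
    have hz : ∑ k ∈ Finset.Ico (k₀ + 1) k₁, (a k (η k) + b (k - 1) (η k)) = 0 :=
      Finset.sum_eq_zero fun k _ => h k (η k)
    linarith

/-- Differentiability of the perturbed Lagrangian along admissible variations. -/
lemma aux_key (n : ℕ)
    (Lr : Matrix (Fin n) (Fin n) ℝ → Matrix (Fin n) (Fin n) ℝ → ℝ)
    (hLr : ContDiffOn ℝ (⊤ : ℕ∞)
      (fun p : Matrix (Fin n) (Fin n) ℝ × Matrix (Fin n) (Fin n) ℝ => Lr p.1 p.2)
      {p | IsUnit p.1 ∧ IsUnit p.2})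
    (G W : Matrix (Fin n) (Fin n) ℝ) (hG : IsUnit G) (hW : IsUnit W)
    (η μ : Matrix (Fin n) (Fin n) ℝ) :
    HasDerivAt (fun ε : ℝ => Lr (exp (ε • η) * G) (exp (ε • μ) * W))
      (fderiv ℝ (fun p : Matrix (Fin n) (Fin n) ℝ × Matrix (Fin n) (Fin n) ℝ =>
        Lr p.1 p.2) (G, W) (η * G, μ * W)) 0 := by
  have hU : IsOpen {p : Matrix (Fin n) (Fin n) ℝ × Matrix (Fin n) (Fin n) ℝ |
      IsUnit p.1 ∧ IsUnit p.2} := by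
    have hset : {p : Matrix (Fin n) (Fin n) ℝ × Matrix (Fin n) (Fin n) ℝ |
        IsUnit p.1 ∧ IsUnit p.2}
        = (fun p : Matrix (Fin n) (Fin n) ℝ × Matrix (Fin n) (Fin n) ℝ => p.1.det) ⁻¹' {0}ᶜ
          ∩ (fun p : Matrix (Fin n) (Fin n) ℝ × Matrix (Fin n) (Fin n) ℝ => p.2.det) ⁻¹' {0}ᶜ := by
      ext p
      simp [Matrix.isUnit_iff_isUnit_det, isUnit_iff_ne_zero]
    rw [hset]
    exact (isOpen_compl_singleton.preimage (Continuous.matrix_det continuous_fst)).inter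
      (isOpen_compl_singleton.preimage (Continuous.matrix_det continuous_snd))
  have hd : HasFDerivAt
      (fun p : Matrix (Fin n) (Fin n) ℝ × Matrix (Fin n) (Fin n) ℝ => Lr p.1 p.2)
      (fderiv ℝ (fun p : Matrix (Fin n) (Fin n) ℝ × Matrix (Fin n) (Fin n) ℝ =>
        Lr p.1 p.2) (G, W)) (G, W) :=
    ((hLr.contDiffAt (hU.mem_nhds ⟨hG, hW⟩)).differentiableAt (by simp)).hasFDerivAt
  have h1 : HasDerivAt (fun ε : ℝ => exp (ε • η) * G) (η * G) 0 :=
    ((LinearMap.mulRight ℝ G).toContinuousLinearMap).hasFDerivAt.comp_hasDerivAt 0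
      (aux_exp_hasDerivAt n η)
  have h2 : HasDerivAt (fun ε : ℝ => exp (ε • μ) * W) (μ * W) 0 :=
    ((LinearMap.mulRight ℝ W).toContinuousLinearMap).hasFDerivAt.comp_hasDerivAt 0
      (aux_exp_hasDerivAt n μ)
  have hc : HasDerivAt (fun ε : ℝ => (exp (ε • η) * G, exp (ε • μ) * W))
      (η * G, μ * W) 0 := h1.prodMk h2
  have hd' : HasFDerivAt
      (fun p : Matrix (Fin n) (Fin n) ℝ × Matrix (Fin n) (Fin n) ℝ => Lr p.1 p.2)
      (fderiv ℝ (fun p : Matrix (Fin n) (Fin n) ℝ × Matrix (Fin n) (Fin n) ℝ =>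
        Lr p.1 p.2) (G, W))
      ((fun ε : ℝ => (exp (ε • η) * G, exp (ε • μ) * W)) 0) := by
    have h0 : (fun ε : ℝ => (exp (ε • η) * G, exp (ε • μ) * W)) 0 = (G, W) := by
      simp [exp_zero]
    rw [h0]
    exact hd
  exact hd'.comp_hasDerivAt 0 hc

theorem right_trivialized_discrete_euler_lagrange (n : ℕ)
    (Lr : Matrix (Fin n) (Fin n) ℝ → Matrix (Fin n) (Fin n) ℝ → ℝ)
    (hLr : ContDiffOn ℝ (⊤ : ℕ∞)
      (fun p : Matrix (Fin n) (Fin n) ℝ × Matrix (Fin n) (Fin n) ℝ => Lr p.1 p.2)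
      {p | IsUnit p.1 ∧ IsUnit p.2})
    (g w : ℤ → Matrix (Fin n) (Fin n) ℝ)
    (hg : ∀ k, IsUnit (g k))
    (hgw : ∀ k, g (k + 1) = w k * g k) :
    (∀ k₀ k₁ : ℤ, k₀ < k₁ → ∀ η : ℤ → Matrix (Fin n) (Fin n) ℝ,
        η k₀ = 0 → η k₁ = 0 →
      deriv (fun ε : ℝ => ∑ k ∈ Finset.Ico k₀ k₁,
        Lr (exp (ε • η k) * g k)
           (exp (ε • (η (k + 1) - w k * η k * (w k)⁻¹)) * w k)) 0 = 0)
    ↔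
    (∀ k : ℤ, ∀ η : Matrix (Fin n) (Fin n) ℝ,
      deriv (fun ε : ℝ =>
        Lr (exp (ε • η) * g k) (w k)
        + Lr (g (k - 1)) (exp (ε • η) * w (k - 1))
        - Lr (g k) (exp (ε • (w k * η * (w k)⁻¹)) * w k)) 0 = 0) := by
  have hw : ∀ k, IsUnit (w k) := by
    intro k
    have h := hg (k + 1)
    rw [hgw k, Matrix.isUnit_iff_isUnit_det, Matrix.det_mul] at h
    rw [Matrix.isUnit_iff_isUnit_det]
    exact isUnit_of_mul_isUnit_left h
  set L : ℤ → (Matrix (Fin n) (Fin n) ℝ × Matrix (Fin n) (Fin n) ℝ →L[ℝ] ℝ) :=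
    fun k => fderiv ℝ (fun p : Matrix (Fin n) (Fin n) ℝ × Matrix (Fin n) (Fin n) ℝ =>
      Lr p.1 p.2) (g k, w k) with hL
  have key : ∀ (k : ℤ) (η μ : Matrix (Fin n) (Fin n) ℝ),
      HasDerivAt (fun ε : ℝ => Lr (exp (ε • η) * g k) (exp (ε • μ) * w k))
        (L k (η * g k, μ * w k)) 0 :=
    fun k η μ => aux_key n Lr hLr (g k) (w k) (hg k) (hw k) η μ
  have hsplit : ∀ (k : ℤ) (x y : Matrix (Fin n) (Fin n) ℝ),
      L k (x * g k, (y - w k * x * (w k)⁻¹) * w k)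
      = L k (x * g k, -(w k * x * (w k)⁻¹ * w k)) + L k (0, y * w k) := by
    intro k x y
    rw [← map_add]
    congr 1
    rw [Prod.mk_add_mk, add_zero, Matrix.sub_mul]
    congr 1
    abel
  have hcalc1 : ∀ (k₀ k₁ : ℤ) (η : ℤ → Matrix (Fin n) (Fin n) ℝ),
      deriv (fun ε : ℝ => ∑ k ∈ Finset.Ico k₀ k₁,
        Lr (exp (ε • η k) * g k)
           (exp (ε • (η (k + 1) - w k * η k * (w k)⁻¹)) * w k)) 0
      = ∑ k ∈ Finset.Ico k₀ k₁,
          (L k (η k * g k, -(w k * η k * (w k)⁻¹ * w k)) + L k (0, η (k + 1) * w k)) := by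
    intro k₀ k₁ η
    have hder : HasDerivAt (fun ε : ℝ => ∑ k ∈ Finset.Ico k₀ k₁,
        Lr (exp (ε • η k) * g k)
           (exp (ε • (η (k + 1) - w k * η k * (w k)⁻¹)) * w k))
        (∑ k ∈ Finset.Ico k₀ k₁,
          L k (η k * g k, (η (k + 1) - w k * η k * (w k)⁻¹) * w k)) 0 :=
      HasDerivAt.fun_sum fun k _ => key k (η k) (η (k + 1) - w k * η k * (w k)⁻¹)
    rw [hder.deriv]
    exact Finset.sum_congr rfl fun k _ => hsplit k (η k) (η (k + 1))
  have hcalc2 : ∀ (k : ℤ) (η : Matrix (Fin n) (Fin n) ℝ),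
      deriv (fun ε : ℝ =>
        Lr (exp (ε • η) * g k) (w k)
        + Lr (g (k - 1)) (exp (ε • η) * w (k - 1))
        - Lr (g k) (exp (ε • (w k * η * (w k)⁻¹)) * w k)) 0
      = L k (η * g k, -(w k * η * (w k)⁻¹ * w k)) + L (k - 1) (0, η * w (k - 1)) := by
    intro k η
    have h1 : HasDerivAt (fun ε : ℝ => Lr (exp (ε • η) * g k) (w k))
        (L k (η * g k, 0)) 0 := by
      have h := key k η 0
      simpa using h
    have h2 : HasDerivAt (fun ε : ℝ => Lr (g (k - 1)) (exp (ε • η) * w (k - 1)))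
        (L (k - 1) (0, η * w (k - 1))) 0 := by
      have h := key (k - 1) 0 η
      simpa using h
    have h3 : HasDerivAt
        (fun ε : ℝ => Lr (g k) (exp (ε • (w k * η * (w k)⁻¹)) * w k))
        (L k (0, w k * η * (w k)⁻¹ * w k)) 0 := by
      have h := key k 0 (w k * η * (w k)⁻¹)
      simpa using h
    rw [((h1.fun_add h2).fun_sub h3).deriv]
    have hak : L k (η * g k, -(w k * η * (w k)⁻¹ * w k))
        = L k (η * g k, 0) - L k (0, w k * η * (w k)⁻¹ * w k) := by
      rw [← map_sub]
      congr 1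
      rw [Prod.mk_sub_mk, sub_zero, zero_sub]
    rw [hak]
    ring
  simp only [hcalc1, hcalc2]
  exact aux_abstract
    (fun k x => L k (x * g k, -(w k * x * (w k)⁻¹ * w k)))
    (fun k x => L k (0, x * w k))
    (fun k => by simp [Prod.mk_zero_zero]) (fun k => by simp [Prod.mk_zero_zero])
end

section
/- Let Φ be a smooth representation of GL(n,ℝ) on ℝ^m with infinitesimal representation φ, fix a ∈ ℝ^m, and let 𝕃⁽ʳ⁾ : GL(n,ℝ) × GL(n,ℝ) → ℝ be smooth and invariant under right translations by the isotropy subgroup: 𝕃⁽ʳ⁾(g·h, w) = 𝕃⁽ʳ⁾(g, w) whenever Φ(h)·a = a. Let Λ : GL(n,ℝ) × ℝ^m → ℝ be smooth with Λ(w, Φ(g)·a) = 𝕃⁽ʳ⁾(g, w) for all g, w. Suppose sequences (g_k), (w_k) in GL(n,ℝ) satisfy g_{k+1} = w_k·g_k and the right-trivialized discrete Euler–Lagrange equations: for all k and all η ∈ M(n,ℝ), d/dε [ 𝕃⁽ʳ⁾(exp(εη)·g_k, w_k) + 𝕃⁽ʳ⁾(g_{k−1}, exp(εη)·w_{k−1})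 − 𝕃⁽ʳ⁾(g_k, exp(ε w_kηw_k⁻¹)·w_k) ]|_{ε=0} = 0. Then, setting p_k := Φ(g_k)·a, one has p_{k+1} = Φ(w_k)·p_k and the right discrete Euler–Poincaré equations hold: for all k and all η ∈ M(n,ℝ), d/dε Λ(exp(ε w_kηw_k⁻¹)·w_k, p_k)|_{ε=0} = d/dε Λ(exp(εη)·w_{k−1}, p_{k−1})|_{ε=0} + (D_pΛ(w_k,p_k))(φ(η)·p_k). -/
/- STATEMENT 14 (Theorem 2(a), reduction form): if 𝕃⁽ʳ⁾ is invariant under right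
translations by the isotropy subgroup of a, Λ is the reduced Lagrangian
(Λ(w, Φ(g)·a) = 𝕃⁽ʳ⁾(g,w)), and (g_k, w_k) with g_{k+1} = w_k·g_k satisfies the
right-trivialized discrete Euler–Lagrange equations, then p_k := Φ(g_k)·a satisfies
p_{k+1} = Φ(w_k)·p_k and the right discrete Euler–Poincaré equations hold. -/

open Matrix NormedSpace

/-- Auxiliary: each entry of `ε ↦ exp (ε • ξ)` is differentiable at `0`. -/
lemma aux_entry_diff {n : ℕ} (ξ : Matrix (Fin n) (Fin n) ℝ) (i j : Fin n) :
    DifferentiableAt ℝ (fun ε : ℝ => exp (ε • ξ) i j) 0 := by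
  letI : SeminormedRing (Matrix (Fin n) (Fin n) ℝ) := Matrix.linftyOpSemiNormedRing
  letI : NormedRing (Matrix (Fin n) (Fin n) ℝ) := Matrix.linftyOpNormedRing
  letI : NormedAlgebra ℝ (Matrix (Fin n) (Fin n) ℝ) := Matrix.linftyOpNormedAlgebra
  have h := hasDerivAt_exp_smul_const (𝕂 := ℝ) ξ (0 : ℝ)
  let L : Matrix (Fin n) (Fin n) ℝ →L[ℝ] ℝ :=
    { toFun := fun M => M i j, map_add' := fun _ _ => rfl, map_smul' := fun _ _ => rfl,
      cont := continuous_id.matrix_elem i j }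
  exact (L.hasFDerivAt.comp_hasDerivAt 0 h).differentiableAt

attribute [local instance] Matrix.normedAddCommGroup Matrix.normedSpace

/-- Auxiliary: `ε ↦ exp (ε • ξ)` is differentiable at `0` (w.r.t. the sup norm on
matrices). -/
lemma aux_exp_diff {n : ℕ} (ξ : Matrix (Fin n) (Fin n) ℝ) :
    DifferentiableAt ℝ (fun ε : ℝ => exp (ε • ξ)) 0 :=
  differentiableAt_pi.mpr fun i => differentiableAt_pi.mpr fun j => aux_entry_diff ξ i j

/-- Auxiliary: `ε ↦ exp (ε • ξ) * c` is differentiable at `0`. -/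
lemma aux_exp_mul_diff {n : ℕ} (ξ c : Matrix (Fin n) (Fin n) ℝ) :
    DifferentiableAt ℝ (fun ε : ℝ => exp (ε • ξ) * c) 0 := by
  have hR : DifferentiableAt ℝ (fun A : Matrix (Fin n) (Fin n) ℝ => A * c)
      (exp ((0:ℝ) • ξ)) := by
    let L : Matrix (Fin n) (Fin n) ℝ →L[ℝ] Matrix (Fin n) (Fin n) ℝ :=
      { toFun := fun A => A * c, map_add' := fun A B => add_mul A B c,
        map_smul' := fun r A => smul_mul_assoc r A c,
        cont := (continuous_id.matrix_mul continuous_const : _) }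
    exact L.differentiableAt
  exact hR.comp 0 (aux_exp_diff ξ)

theorem reduction_to_right_discrete_euler_poincare (n m : ℕ)
    (Φ : Matrix (Fin n) (Fin n) ℝ → ((Fin m → ℝ) →L[ℝ] (Fin m → ℝ)))
    (hΦone : Φ 1 = 1)
    (hΦmul : ∀ A B : Matrix (Fin n) (Fin n) ℝ, IsUnit A → IsUnit B →
      Φ (A * B) = (Φ A).comp (Φ B))
    (hΦsmooth : ContDiffOn ℝ (⊤ : ℕ∞)
      (fun p : Matrix (Fin n) (Fin n) ℝ × (Fin m → ℝ) => Φ p.1 p.2)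
      {p | IsUnit p.1})
    (a : Fin m → ℝ)
    (Lr : Matrix (Fin n) (Fin n) ℝ → Matrix (Fin n) (Fin n) ℝ → ℝ)
    (hLr : ContDiffOn ℝ (⊤ : ℕ∞)
      (fun p : Matrix (Fin n) (Fin n) ℝ × Matrix (Fin n) (Fin n) ℝ => Lr p.1 p.2)
      {p | IsUnit p.1 ∧ IsUnit p.2})
    (hinv : ∀ g h w : Matrix (Fin n) (Fin n) ℝ, IsUnit h → Φ h a = a →
      Lr (g * h) w = Lr g w)
    (Λ : Matrix (Fin n) (Fin n) ℝ → (Fin m → ℝ) → ℝ)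
    (hΛ : ContDiffOn ℝ (⊤ : ℕ∞)
      (fun p : Matrix (Fin n) (Fin n) ℝ × (Fin m → ℝ) => Λ p.1 p.2)
      {p | IsUnit p.1})
    (hred : ∀ g w : Matrix (Fin n) (Fin n) ℝ, Λ w (Φ g a) = Lr g w)
    (g w : ℤ → Matrix (Fin n) (Fin n) ℝ)
    (hg : ∀ k, IsUnit (g k)) (hwu : ∀ k, IsUnit (w k))
    (hgw : ∀ k, g (k + 1) = w k * g k)
    (hDEL : ∀ k : ℤ, ∀ η : Matrix (Fin n) (Fin n) ℝ,
      deriv (fun ε : ℝ =>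
        Lr (exp (ε • η) * g k) (w k)
        + Lr (g (k - 1)) (exp (ε • η) * w (k - 1))
        - Lr (g k) (exp (ε • (w k * η * (w k)⁻¹)) * w k)) 0 = 0)
    (p : ℤ → (Fin m → ℝ)) (hpdef : ∀ k, p k = Φ (g k) a) :
    (∀ k, p (k + 1) = Φ (w k) (p k)) ∧
    (∀ k : ℤ, ∀ η : Matrix (Fin n) (Fin n) ℝ,
      deriv (fun ε : ℝ => Λ (exp (ε • (w k * η * (w k)⁻¹)) * w k) (p k)) 0
        = deriv (fun ε : ℝ => Λ (exp (ε • η) * w (k - 1)) (p (k - 1))) 0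
          + fderiv ℝ (fun v => Λ (w k) v) (p k) (infRep n m Φ η (p k))) := by
  have hO1 : IsOpen {q : Matrix (Fin n) (Fin n) ℝ × (Fin m → ℝ) | IsUnit q.1} := by
    have : {q : Matrix (Fin n) (Fin n) ℝ × (Fin m → ℝ) | IsUnit q.1}
        = (fun q : Matrix (Fin n) (Fin n) ℝ × (Fin m → ℝ) => (q.1).det) ⁻¹' {x | x ≠ 0} := by
      ext q
      simp [Matrix.isUnit_iff_isUnit_det, isUnit_iff_ne_zero]
    rw [this]
    exact IsOpen.preimage (continuous_fst.matrix_det) isOpen_ne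
  have hO1' : IsOpen {q : Matrix (Fin n) (Fin n) ℝ × Matrix (Fin n) (Fin n) ℝ | IsUnit q.1} := by
    have : {q : Matrix (Fin n) (Fin n) ℝ × Matrix (Fin n) (Fin n) ℝ | IsUnit q.1}
        = (fun q : Matrix (Fin n) (Fin n) ℝ × Matrix (Fin n) (Fin n) ℝ => (q.1).det) ⁻¹'
          {x | x ≠ 0} := by
      ext q
      simp [Matrix.isUnit_iff_isUnit_det, isUnit_iff_ne_zero]
    rw [this]
    exact IsOpen.preimage (continuous_fst.matrix_det) isOpen_ne
  have hO2' : IsOpen {q : Matrix (Fin n) (Fin n) ℝ × Matrix (Fin n) (Fin n) ℝ | IsUnit q.2} := by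
    have : {q : Matrix (Fin n) (Fin n) ℝ × Matrix (Fin n) (Fin n) ℝ | IsUnit q.2}
        = (fun q : Matrix (Fin n) (Fin n) ℝ × Matrix (Fin n) (Fin n) ℝ => (q.2).det) ⁻¹'
          {x | x ≠ 0} := by
      ext q
      simp [Matrix.isUnit_iff_isUnit_det, isUnit_iff_ne_zero]
    rw [this]
    exact IsOpen.preimage (continuous_snd.matrix_det) isOpen_ne
  have hO2 : IsOpen {q : Matrix (Fin n) (Fin n) ℝ × Matrix (Fin n) (Fin n) ℝ |
      IsUnit q.1 ∧ IsUnit q.2} := by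
    have : {q : Matrix (Fin n) (Fin n) ℝ × Matrix (Fin n) (Fin n) ℝ | IsUnit q.1 ∧ IsUnit q.2}
        = {q : Matrix (Fin n) (Fin n) ℝ × Matrix (Fin n) (Fin n) ℝ | IsUnit q.1}
          ∩ {q | IsUnit q.2} := rfl
    rw [this]
    exact hO1'.inter hO2'
  -- differentiability of the three evaluation maps
  have hLrD : ∀ x y : Matrix (Fin n) (Fin n) ℝ, IsUnit x → IsUnit y →
      DifferentiableAt ℝ
        (fun q : Matrix (Fin n) (Fin n) ℝ × Matrix (Fin n) (Fin n) ℝ => Lr q.1 q.2) (x, y) :=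
    fun x y hx hy =>
      (hLr.differentiableOn (by simp)).differentiableAt (hO2.mem_nhds ⟨hx, hy⟩)
  have hΛD : ∀ (x : Matrix (Fin n) (Fin n) ℝ) (v : Fin m → ℝ), IsUnit x →
      DifferentiableAt ℝ
        (fun q : Matrix (Fin n) (Fin n) ℝ × (Fin m → ℝ) => Λ q.1 q.2) (x, v) :=
    fun x v hx =>
      (hΛ.differentiableOn (by simp)).differentiableAt (hO1.mem_nhds hx)
  have hΦD : ∀ (x : Matrix (Fin n) (Fin n) ℝ) (v : Fin m → ℝ), IsUnit x →
      DifferentiableAt ℝ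
        (fun q : Matrix (Fin n) (Fin n) ℝ × (Fin m → ℝ) => Φ q.1 q.2) (x, v) :=
    fun x v hx =>
      (hΦsmooth.differentiableOn (by simp)).differentiableAt (hO1.mem_nhds hx)
  -- differentiability of curves
  have dLr1 : ∀ (ξ c d : Matrix (Fin n) (Fin n) ℝ), IsUnit c → IsUnit d →
      DifferentiableAt ℝ (fun ε : ℝ => Lr (exp (ε • ξ) * c) d) 0 := by
    intro ξ c d hc hd
    have hγ : DifferentiableAt ℝ (fun ε : ℝ => (exp (ε • ξ) * c, d)) 0 :=
      (aux_exp_mul_diff ξ c).prodMk (differentiableAt_const d)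
    exact (hLrD _ _ ((Matrix.isUnit_exp _).mul hc) hd).comp 0 hγ
  have dLr2 : ∀ (ξ c d : Matrix (Fin n) (Fin n) ℝ), IsUnit c → IsUnit d →
      DifferentiableAt ℝ (fun ε : ℝ => Lr c (exp (ε • ξ) * d)) 0 := by
    intro ξ c d hc hd
    have hγ : DifferentiableAt ℝ (fun ε : ℝ => (c, exp (ε • ξ) * d)) 0 :=
      (differentiableAt_const c).prodMk (aux_exp_mul_diff ξ d)
    exact (hLrD _ _ hc ((Matrix.isUnit_exp _).mul hd)).comp
      (f := fun ε : ℝ => (c, exp (ε • ξ) * d)) 0 hγ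
  have dΦc : ∀ (ξ : Matrix (Fin n) (Fin n) ℝ) (v : Fin m → ℝ),
      DifferentiableAt ℝ (fun ε : ℝ => Φ (exp (ε • ξ)) v) 0 := by
    intro ξ v
    have hγ : DifferentiableAt ℝ (fun ε : ℝ => (exp (ε • ξ), v)) 0 :=
      (aux_exp_diff ξ).prodMk (differentiableAt_const v)
    exact (hΦD (exp ((0:ℝ) • ξ)) v (Matrix.isUnit_exp _)).comp 0 hγ
  refine ⟨?_, ?_⟩
  · intro k
    rw [hpdef, hpdef, hgw k, hΦmul _ _ (hwu k) (hg k)]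
    rfl
  · intro k η
    -- identifications of the three functions
    have f1eq : (fun ε : ℝ => Lr (exp (ε • η) * g k) (w k))
        = fun ε : ℝ => Λ (w k) (Φ (exp (ε • η)) (p k)) := by
      funext ε
      rw [← hred, hΦmul _ _ (Matrix.isUnit_exp _) (hg k),
        ContinuousLinearMap.comp_apply, ← hpdef]
    have f2eq : (fun ε : ℝ => Lr (g (k - 1)) (exp (ε • η) * w (k - 1)))
        = fun ε : ℝ => Λ (exp (ε • η) * w (k - 1)) (p (k - 1)) := by
      funext ε
      rw [hpdef, hred]
    have f3eq : (fun ε : ℝ => Lr (g k) (exp (ε • (w k * η * (w k)⁻¹)) * w k))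
        = fun ε : ℝ => Λ (exp (ε • (w k * η * (w k)⁻¹)) * w k) (p k) := by
      funext ε
      rw [hpdef, hred]
    -- differentiability of the three terms
    have d1 : DifferentiableAt ℝ (fun ε : ℝ => Lr (exp (ε • η) * g k) (w k)) 0 :=
      dLr1 η (g k) (w k) (hg k) (hwu k)
    have d2 : DifferentiableAt ℝ
        (fun ε : ℝ => Lr (g (k - 1)) (exp (ε • η) * w (k - 1))) 0 :=
      dLr2 η (g (k - 1)) (w (k - 1)) (hg (k - 1)) (hwu (k - 1))
    have d3 : DifferentiableAt ℝ
        (fun ε : ℝ => Lr (g k) (exp (ε • (w k * η * (w k)⁻¹)) * w k)) 0 :=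
      dLr2 _ (g k) (w k) (hg k) (hwu k)
    -- split the discrete Euler–Lagrange equation
    have hzero : deriv (fun ε : ℝ => Lr (exp (ε • η) * g k) (w k)) 0
        + deriv (fun ε : ℝ => Lr (g (k - 1)) (exp (ε • η) * w (k - 1))) 0
        - deriv (fun ε : ℝ => Lr (g k) (exp (ε • (w k * η * (w k)⁻¹)) * w k)) 0 = 0 := by
      have hD := ((d1.hasDerivAt.add d2.hasDerivAt).sub d3.hasDerivAt).deriv
      rw [← hD]
      exact hDEL k η
    -- the first term equals the fiber-derivative term
    have hc : DifferentiableAt ℝ (fun ε : ℝ => Φ (exp (ε • η)) (p k)) 0 := dΦc η (p k)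
    have hΛw : DifferentiableAt ℝ (fun v => Λ (w k) v) (p k) := by
      have hγ : DifferentiableAt ℝ (fun v : Fin m → ℝ => ((w k), v)) (p k) :=
        (differentiableAt_const (w k)).prodMk differentiableAt_id
      exact (hΛD (w k) (p k) (hwu k)).comp (p k) hγ
    have h0 : Φ (exp ((0:ℝ) • η)) (p k) = p k := by
      rw [zero_smul, exp_zero, hΦone]
      rfl
    have key : HasFDerivAt (fun v => Λ (w k) v)
        (fderiv ℝ (fun v => Λ (w k) v) (p k)) (Φ (exp ((0:ℝ) • η)) (p k)) := by
      rw [h0]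
      exact hΛw.hasFDerivAt
    have hderiv1 : deriv (fun ε : ℝ => Λ (w k) (Φ (exp (ε • η)) (p k))) 0
        = fderiv ℝ (fun v => Λ (w k) v) (p k) (infRep n m Φ η (p k)) :=
      (key.comp_hasDerivAt 0 hc.hasDerivAt).deriv
    rw [f1eq, f2eq, f3eq, hderiv1] at hzero
    linarith [hzero]
end
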